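/- arXiv:2111.13430 — 16 statements merged into one kernel-verified Lean document; each statement's English description precedes it below -/
import Mathlib

section
/- If the nonnegative parameters b, α, β₁, β₂, k₁, k₂ satisfy conditions (C), then V is a quadratic stochastic operator on S³: there exist real coefficients P_{ij,k} for i,j,k ∈ {1,2,3,4} with P_{ij,k} ≥ 0, P_{ij,k} = P_{ji,k}, and Σ_{k=1}^{4} P_{ij,k} = 1 for all i,j, such that for every point (x₁,x₂,x₃,x₄) ∈ S³ and every k, the k-th coordinate of V(x₁,x₂,x₃,x₄) equals Σ_{i=1}^{4} Σ_{j=1}^{4} P_{ij,k} x_i x_j. -/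
/-- The discrete-time SISI epidemic operator. -/
noncomputable def sisiV (b α β₁ β₂ k₁ k₂ : ℝ) (p : ℝ × ℝ × ℝ × ℝ) : ℝ × ℝ × ℝ × ℝ :=
  (p.1 + b - b * p.1 - β₁ * (k₁ * p.2.1 + k₂ * p.2.2.2) * p.1,
   p.2.1 - b * p.2.1 - α * p.2.1 + β₁ * (k₁ * p.2.1 + k₂ * p.2.2.2) * p.1,
   p.2.2.1 - b * p.2.2.1 + α * p.2.1 - β₂ * (k₁ * p.2.1 + k₂ * p.2.2.2) * p.2.2.1,
   p.2.2.2 - b * p.2.2.2 + β₂ * (k₁ * p.2.1 + k₂ * p.2.2.2) * p.2.2.1)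

/-- The simplex S³ in ℝ⁴. -/
def simplexS3 : Set (ℝ × ℝ × ℝ × ℝ) :=
  {p | 0 ≤ p.1 ∧ 0 ≤ p.2.1 ∧ 0 ≤ p.2.2.1 ∧ 0 ≤ p.2.2.2 ∧
       p.1 + p.2.1 + p.2.2.1 + p.2.2.2 = 1}

/-- Conditions (C) on the parameters. -/
def condC (b α β₁ β₂ k₁ k₂ : ℝ) : Prop :=
  α + b ≤ 1 ∧ β₁ * k₂ ≤ 2 ∧ β₂ * k₁ ≤ 2 ∧ b + β₂ * k₂ ≤ 1 ∧
  |b - β₁ * k₁| ≤ 1 ∧ |b - β₂ * k₂| ≤ 1 ∧ |b - β₁ * k₂| ≤ 1 ∧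
  |α + b - β₁ * k₁| ≤ 1 ∧ |α - b - β₂ * k₁| ≤ 1

/-- The coordinates of a point of ℝ⁴ as a function `Fin 4 → ℝ`. -/
noncomputable def coords (p : ℝ × ℝ × ℝ × ℝ) : Fin 4 → ℝ :=
  ![p.1, p.2.1, p.2.2.1, p.2.2.2]

/-!
On the simplex `x + u + y + v = 1`, so multiplying the constant term of `V` by
`(x + u + y + v)²` and its linear terms by `x + u + y + v` leaves `V` unchanged there and turns
each coordinate into a quadratic form. Its coefficients, with the coefficient of each mixed
monomial `xᵢxⱼ` split evenly between `P i j k` and `P j i k`, are the heredity coefficients.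
Under (C) they are nonnegative, and `∑ k, P i j k = 1` because the coordinates of `V` sum to
`b + (1 - b)(x + u + y + v)`.
-/

section

variable (b α β₁ β₂ k₁ k₂ : ℝ)

noncomputable def sisiVHom (p : ℝ × ℝ × ℝ × ℝ) : ℝ × ℝ × ℝ × ℝ :=
  let s := p.1 + p.2.1 + p.2.2.1 + p.2.2.2
  let force := k₁ * p.2.1 + k₂ * p.2.2.2
  (b * s ^ 2 + (1 - b) * p.1 * s - β₁ * force * p.1,
   (1 - b - α) * p.2.1 * s + β₁ * force * p.1,
   ((1 - b) * p.2.2.1 + α * p.2.1) * s - β₂ * force * p.2.2.1,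
   (1 - b) * p.2.2.2 * s + β₂ * force * p.2.2.1)

noncomputable def sisiP : Fin 4 → Fin 4 → Fin 4 → ℝ :=
  ![![![1, 0, 0, 0],
     ![(1+b-β₁*k₁)/2, (1-b-α+β₁*k₁)/2, α/2, 0],
     ![(1+b)/2, 0, (1-b)/2, 0],
     ![(1+b-β₁*k₂)/2, β₁*k₂/2, 0, (1-b)/2]],
    ![![(1+b-β₁*k₁)/2, (1-b-α+β₁*k₁)/2, α/2, 0],
     ![b, 1-b-α, α, 0],
     ![b, (1-b-α)/2, (1-b+α-β₂*k₁)/2, β₂*k₁/2],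
     ![b, (1-b-α)/2, α/2, (1-b)/2]],
    ![![(1+b)/2, 0, (1-b)/2, 0],
     ![b, (1-b-α)/2, (1-b+α-β₂*k₁)/2, β₂*k₁/2],
     ![b, 0, 1-b, 0],
     ![b, 0, (1-b-β₂*k₂)/2, (1-b+β₂*k₂)/2]],
    ![![(1+b-β₁*k₂)/2, β₁*k₂/2, 0, (1-b)/2],
     ![b, (1-b-α)/2, α/2, (1-b)/2],
     ![b, 0, (1-b-β₂*k₂)/2, (1-b+β₂*k₂)/2],
     ![b, 0, 0, 1-b]]]

theorem sisiVHom_eq_sisiV {p : ℝ × ℝ × ℝ × ℝ} (hp : p ∈ simplexS3) :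
    sisiVHom b α β₁ β₂ k₁ k₂ p = sisiV b α β₁ β₂ k₁ k₂ p := by
  obtain ⟨-, -, -, -, hs⟩ := hp
  simp only [sisiVHom, sisiV, hs]
  ext <;> ring

theorem coords_sisiVHom (p : ℝ × ℝ × ℝ × ℝ) (k : Fin 4) :
    coords (sisiVHom b α β₁ β₂ k₁ k₂ p) k =
      ∑ i, ∑ j, sisiP b α β₁ β₂ k₁ k₂ i j k * coords p i * coords p j := by
  fin_cases k <;>
    simp only [sisiVHom, sisiP, coords, Fin.sum_univ_four, Fin.isValue, Fin.mk_one, Fin.reduceFinMk,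
      Fin.zero_eta, Matrix.cons_val, Matrix.cons_val', Matrix.cons_val_zero, Matrix.cons_val_one,
      Matrix.cons_val_fin_one] <;>
    ring

theorem sisiP_symm (i j k : Fin 4) :
    sisiP b α β₁ β₂ k₁ k₂ i j k = sisiP b α β₁ β₂ k₁ k₂ j i k := by
  fin_cases i <;> fin_cases j <;> rfl

theorem sum_sisiP (i j : Fin 4) : ∑ k, sisiP b α β₁ β₂ k₁ k₂ i j k = 1 := by
  fin_cases i <;> fin_cases j <;>
    simp only [sisiP, Fin.sum_univ_four, Fin.isValue, Fin.mk_one, Fin.reduceFinMk, Fin.zero_eta,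
      Matrix.cons_val, Matrix.cons_val', Matrix.cons_val_zero, Matrix.cons_val_one,
      Matrix.cons_val_fin_one] <;>
    ring

theorem sisiP_nonneg (hb : 0 ≤ b) (hα : 0 ≤ α) (hβ₁ : 0 ≤ β₁) (hβ₂ : 0 ≤ β₂)
    (hk₁ : 0 ≤ k₁) (hk₂ : 0 ≤ k₂) (hC : condC b α β₁ β₂ k₁ k₂) (i j k : Fin 4) :
    0 ≤ sisiP b α β₁ β₂ k₁ k₂ i j k := by
  obtain ⟨hαb, -, -, hbβ₂k₂, hβ₁k₁, hβ₂k₂, hβ₁k₂, hαβ₁k₁, hαβ₂k₁⟩ := hC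
  rw [abs_le] at hβ₁k₁ hβ₂k₂ hβ₁k₂ hαβ₁k₁ hαβ₂k₁
  have hβ₁k₂_nonneg := mul_nonneg hβ₁ hk₂
  have hβ₂k₁_nonneg := mul_nonneg hβ₂ hk₁
  fin_cases i <;> fin_cases j <;> fin_cases k <;>
    simp only [sisiP, Fin.isValue, Fin.mk_one, Fin.reduceFinMk, Fin.zero_eta, Matrix.cons_val,
      Matrix.cons_val', Matrix.cons_val_zero, Matrix.cons_val_one, Matrix.cons_val_fin_one] <;>
    linarith

end

theorem sisi_is_QSO (b α β₁ β₂ k₁ k₂ : ℝ)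
    (hb : 0 ≤ b) (hα : 0 ≤ α) (hβ₁ : 0 ≤ β₁) (hβ₂ : 0 ≤ β₂)
    (hk₁ : 0 ≤ k₁) (hk₂ : 0 ≤ k₂)
    (hC : condC b α β₁ β₂ k₁ k₂) :
    ∃ P : Fin 4 → Fin 4 → Fin 4 → ℝ,
      (∀ i j k, 0 ≤ P i j k) ∧
      (∀ i j k, P i j k = P j i k) ∧
      (∀ i j, ∑ k, P i j k = 1) ∧
      (∀ p ∈ simplexS3, ∀ k,
        coords (sisiV b α β₁ β₂ k₁ k₂ p) k =
          ∑ i, ∑ j, P i j k * coords p i * coords p j) := by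
  refine ⟨sisiP b α β₁ β₂ k₁ k₂, sisiP_nonneg b α β₁ β₂ k₁ k₂ hb hα hβ₁ hβ₂ hk₁ hk₂ hC,
    sisiP_symm b α β₁ β₂ k₁ k₂, sum_sisiP b α β₁ β₂ k₁ k₂, fun p hp k => ?_⟩
  rw [← sisiVHom_eq_sisiV b α β₁ β₂ k₁ k₂ hp, coords_sisiVHom]
end

section
/- Suppose b, α, β₁, β₂, k₁, k₂ are all strictly positive, β₁k₁ = b + α, and αβ₂k₂ > bβ₁k₁. Then equation (E) has a unique positive solution, namely A = (αβ₂k₂ − bβ₁k₁)/(β₁β₂k₁). -/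
def eqE (b α β₁ β₂ k₁ k₂ A : ℝ) : Prop :=
  1 = b * β₁ * k₁ / ((b + β₁ * A) * (b + α)) +
      α * β₁ * β₂ * k₂ * A / ((b + β₁ * A) * (b + β₂ * A) * (b + α))

theorem eqE_unique_solution_boundary (b α β₁ β₂ k₁ k₂ : ℝ)
    (hb : 0 < b) (hα : 0 < α) (hβ₁ : 0 < β₁) (hβ₂ : 0 < β₂)
    (hk₁ : 0 < k₁) (hk₂ : 0 < k₂)
    (heq : β₁ * k₁ = b + α) (hgt : α * β₂ * k₂ > b * β₁ * k₁) :
    ∀ A : ℝ, (0 < A ∧ eqE b α β₁ β₂ k₁ k₂ A) ↔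
      A = (α * β₂ * k₂ - b * β₁ * k₁) / (β₁ * β₂ * k₁) := by
  intro A
  constructor
  · rintro ⟨hA, hE⟩
    unfold eqE at hE
    have h1 : (0:ℝ) < b + β₁*A := by positivity
    have h2 : (0:ℝ) < b + β₂*A := by positivity
    have h3 : (0:ℝ) < b + α := by positivity
    field_simp at hE
    rw [eq_div_iff (by positivity)]
    have key2 : ((b+β₁*A)*(b+α)*β₁*A) * ((b+β₂*A)*(b+α) - α*β₂*k₂) = 0 := by
      linear_combination (b+β₁*A)*(b+α)*hE + (b+β₁*A)*(b+α)*b*(b+β₂*A)*heq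
    rcases mul_eq_zero.mp key2 with h | h
    · exact absurd h (by positivity)
    · linear_combination h + (A*β₂+b)*heq
  · intro hA
    have hApos : 0 < A := by
      rw [hA]
      apply div_pos (by linarith) (by positivity)
    refine ⟨hApos, ?_⟩
    have h1 : (0:ℝ) < b + β₁*A := by positivity
    have h2 : (0:ℝ) < b + β₂*A := by positivity
    have h3 : (0:ℝ) < b + α := by positivity
    have hthis : β₂*A*(β₁*k₁) = α*β₂*k₂ - b*β₁*k₁ := by
      rw [hA]; field_simp
    have hkey : (b+β₂*A)*(b+α) = α*β₂*k₂ := by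
      linear_combination hthis - (b+β₂*A)*heq
    unfold eqE
    rw [eq_comm]
    field_simp
    linear_combination b*(b+β₂*A)*heq - β₁*A*hkey
end

section
/- Suppose b > 0, β₁ > 0, α, β₂, k₁, k₂ ≥ 0, and β₁k₁ > b + α. Then equation (E) has exactly one positive solution A. -/
lemma eqE_iff_poly (b α β₁ β₂ k₁ k₂ A : ℝ) (hb : 0 < b) (hβ₁ : 0 < β₁) (hα : 0 ≤ α)
    (hβ₂ : 0 ≤ β₂) (hA : 0 < A) :
    eqE b α β₁ β₂ k₁ k₂ A ↔
      β₁*β₂*(b+α)*A^2 + (b*(β₁+β₂)*(b+α) - b*β₁*β₂*k₁ - α*β₁*β₂*k₂)*A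
        + b^2*(b+α-β₁*k₁) = 0 := by
  have d1 : b + β₁*A ≠ 0 := by positivity
  have d2 : b + β₂*A ≠ 0 := by positivity
  have d3 : b + α ≠ 0 := by positivity
  have dd : (b + β₁*A) * (b + α) ≠ 0 := mul_ne_zero d1 d3
  rw [eqE]
  constructor
  · intro h
    field_simp at h
    have h3 : ((b + β₁*A) * (b + α)) *
        (β₁*β₂*(b+α)*A^2 + (b*(β₁+β₂)*(b+α) - b*β₁*β₂*k₁ - α*β₁*β₂*k₂)*A
          + b^2*(b+α-β₁*k₁)) = 0 := by linear_combination ((b + β₁*A) * (b + α)) * h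
    rcases mul_eq_zero.mp h3 with h4 | h4
    · exact absurd h4 dd
    · exact h4
  · intro h
    field_simp
    linear_combination h

theorem eqE_unique_solution (b α β₁ β₂ k₁ k₂ : ℝ)
    (hb : 0 < b) (hβ₁ : 0 < β₁) (hα : 0 ≤ α) (hβ₂ : 0 ≤ β₂)
    (hk₁ : 0 ≤ k₁) (hk₂ : 0 ≤ k₂)
    (hgt : β₁ * k₁ > b + α) :
    ∃! A : ℝ, 0 < A ∧ eqE b α β₁ β₂ k₁ k₂ A := by
  set c₂ : ℝ := β₁*β₂*(b+α) with hc2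
  set c₁ : ℝ := b*(β₁+β₂)*(b+α) - b*β₁*β₂*k₁ - α*β₁*β₂*k₂ with hc1
  set c₀ : ℝ := b^2*(b+α-β₁*k₁) with hc0
  have hc₀ : c₀ < 0 := by
    have h : b + α - β₁*k₁ < 0 := by linarith
    exact mul_neg_of_pos_of_neg (pow_pos hb 2) h
  have hc₂ : 0 ≤ c₂ := by rw [hc2]; positivity
  -- existence of a positive root of the quadratic
  have hex : ∃ A : ℝ, 0 < A ∧ c₂*A^2 + c₁*A + c₀ = 0 := by
    by_cases hβ₂0 : β₂ = 0
    · refine ⟨b*(β₁*k₁-(b+α))/(β₁*(b+α)), ?_, ?_⟩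
      · apply div_pos
        · nlinarith
        · positivity
      · rw [hc2, hc1, hc0]
        subst hβ₂0
        have d : β₁*(b+α) ≠ 0 := by positivity
        field_simp
        ring
    · have hβ₂' : 0 < β₂ := lt_of_le_of_ne hβ₂ (Ne.symm hβ₂0)
      have hc₂' : 0 < c₂ := by rw [hc2]; positivity
      set f : ℝ → ℝ := fun A => c₂*A^2 + c₁*A + c₀ with hf
      set M : ℝ := (|c₁| + |c₀|)/c₂ + 1 with hM
      have hM1 : 1 ≤ M := by
        rw [hM]
        have : 0 ≤ (|c₁| + |c₀|)/c₂ := by positivity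
        linarith
      have hM0 : (0:ℝ) ≤ M := by linarith
      have hMc : c₂ * M = |c₁| + |c₀| + c₂ := by
        rw [hM]; field_simp
      have hfM : 0 ≤ f M := by
        have h1 : 0 ≤ |c₁| + c₁ := by
          have := neg_abs_le c₁; linarith
        have h2 : -c₀ ≤ |c₀| := neg_le_abs c₀
        simp only [hf]
        nlinarith [mul_nonneg hM0 h1, abs_nonneg c₀, abs_nonneg c₁]
      have hcont : ContinuousOn f (Set.Icc 0 M) := by
        apply Continuous.continuousOn; fun_prop
      have hsub := intermediate_value_Icc hM0 hcont
      have h0mem : (0:ℝ) ∈ Set.Icc (f 0) (f M) := by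
        constructor
        · have : f 0 = c₀ := by simp [hf]
          rw [this]; exact hc₀.le
        · exact hfM
      obtain ⟨A, hAmem, hfA⟩ := hsub h0mem
      have hAne : A ≠ 0 := by
        intro h
        rw [h] at hfA
        simp [hf] at hfA
        linarith
      exact ⟨A, lt_of_le_of_ne hAmem.1 (Ne.symm hAne), hfA⟩
  obtain ⟨A, hApos, hAroot⟩ := hex
  refine ⟨A, ⟨hApos, (eqE_iff_poly b α β₁ β₂ k₁ k₂ A hb hβ₁ hα hβ₂ hApos).mpr hAroot⟩, ?_⟩
  rintro y ⟨hy, hyE⟩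
  have hyroot : c₂*y^2 + c₁*y + c₀ = 0 :=
    (eqE_iff_poly b α β₁ β₂ k₁ k₂ y hb hβ₁ hα hβ₂ hy).mp hyE
  by_contra hne
  have hd : y - A ≠ 0 := sub_ne_zero.mpr hne
  have hfac : (y - A) * (c₂*(y+A) + c₁) = 0 := by linear_combination hyroot - hAroot
  rcases mul_eq_zero.mp hfac with h | hsum
  · exact hd h
  · have hprod : c₀ = c₂*y*A := by linear_combination hyroot - y*hsum
    nlinarith [mul_nonneg hc₂ (mul_pos hy hApos).le]
end

section
/- Suppose α = 0, and b, β₁, β₂, k₁, k₂ are strictly positive with β₁k₁ > b. Then the set of fixed points of V in S³ is exactly {λ₁, λ₁₅}, where λ₁ = (1,0,0,0) and λ₁₅ = (b/(β₁k₁), (β₁k₁−b)/(β₁k₁), 0, 0). -/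
set_option maxHeartbeats 2000000 in
theorem fixedPoints_alpha_zero (b α β₁ β₂ k₁ k₂ : ℝ)
    (hα : α = 0) (hb : 0 < b) (hβ₁ : 0 < β₁) (hβ₂ : 0 < β₂)
    (hk₁ : 0 < k₁) (hk₂ : 0 < k₂) (hgt : β₁ * k₁ > b) :
    {p : ℝ × ℝ × ℝ × ℝ | p ∈ simplexS3 ∧ sisiV b α β₁ β₂ k₁ k₂ p = p} =
      {((1 : ℝ), (0 : ℝ), (0 : ℝ), (0 : ℝ)),
       (b / (β₁ * k₁), (β₁ * k₁ - b) / (β₁ * k₁), (0 : ℝ), (0 : ℝ))} := by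
  subst hα
  have hbk : (0:ℝ) < β₁ * k₁ := mul_pos hβ₁ hk₁
  ext ⟨x, u, y, v⟩
  simp only [Set.mem_setOf_eq, simplexS3, sisiV, Prod.mk.injEq, Set.mem_insert_iff,
    Set.mem_singleton_iff]
  constructor
  · rintro ⟨⟨hx, hu, hy, hv, hsum⟩, e1, e2, e3, e4⟩
    -- from e3 : y = 0
    have hF : 0 ≤ k₁ * u + k₂ * v := by positivity
    have hy0 : y = 0 := by
      have h3 : y * (b + β₂ * (k₁ * u + k₂ * v)) = 0 := by nlinarith [e3]
      rcases mul_eq_zero.1 h3 with h | h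
      · exact h
      · nlinarith [mul_nonneg hβ₂.le hF]
    have hv0 : v = 0 := by
      have : b * v = 0 := by nlinarith [e4]
      exact (mul_eq_zero.1 this).resolve_left hb.ne'
    subst hy0; subst hv0
    -- e2 : β₁ * k₁ * u * x = b * u
    have e2' : β₁ * (k₁ * u) * x = b * u := by nlinarith [e2]
    have e1' : b * (1 - x) = β₁ * (k₁ * u) * x := by nlinarith [e1]
    have hux : u = 1 - x := by nlinarith
    have hcase : u * (β₁ * k₁ * x - b) = 0 := by nlinarith
    rcases mul_eq_zero.1 hcase with h | h
    · left
      constructor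
      · nlinarith
      · exact ⟨h, rfl, rfl⟩
    · right
      have hx' : x = b / (β₁ * k₁) := by
        field_simp
        nlinarith
      refine ⟨hx', ?_, rfl, rfl⟩
      rw [hux, hx']
      field_simp
  · rintro (⟨hx, hu, hy, hv⟩ | ⟨hx, hu, hy, hv⟩) <;> subst hx <;> subst hu <;>
      subst hy <;> subst hv
    · norm_num
    · have hne : β₁ * k₁ ≠ 0 := hbk.ne'
      refine ⟨⟨by positivity, ?_, le_refl 0, le_refl 0, ?_⟩, ?_, ?_, ?_, ?_⟩
      · apply div_nonneg (by linarith) hbk.le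
      · field_simp; ring
      · field_simp; ring
      · field_simp; ring
      · ring
      · ring
end

section
/- Suppose β₂ = 0, and b, α, β₁, k₁, k₂ are strictly positive with β₁k₁ > b + α. Then the set of fixed points of V in S³ is exactly {λ₁, λ₁₆}, where λ₁ = (1,0,0,0) and λ₁₆ = ((b+α)/(β₁k₁), b(β₁k₁−b−α)/(β₁k₁(b+α)), α(β₁k₁−b−α)/(β₁k₁(b+α)), 0). -/
open Function Set

/-- `λ₁` -/
def diseaseFreePoint : ℝ × ℝ × ℝ × ℝ := (1, 0, 0, 0)

/-- `λ₁₆`, where `c` stands for the effective contact rate `β₁ k₁`. -/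
noncomputable def endemicPoint (b α c : ℝ) : ℝ × ℝ × ℝ × ℝ :=
  ((b + α) / c, b * (c - b - α) / (c * (b + α)), α * (c - b - α) / (c * (b + α)), 0)

section FixedPoints

variable {b α β₁ k₁ : ℝ}

theorem isFixedPt_sisiV_beta2_zero_iff (k₂ : ℝ) (hb : b ≠ 0) (x u y v : ℝ) :
    IsFixedPt (sisiV b α β₁ 0 k₁ k₂) (x, u, y, v) ↔
      v = 0 ∧ b * y = α * u ∧ b * (1 - x) = (b + α) * u ∧
        u * (β₁ * k₁ * x - (b + α)) = 0 := by
  simp only [IsFixedPt, sisiV, Prod.mk.injEq, zero_mul, sub_zero, add_zero]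
  constructor
  · rintro ⟨e₁, e₂, e₃, e₄⟩
    obtain rfl : v = 0 := (mul_eq_zero.mp (by linarith : b * v = 0)).resolve_left hb
    exact ⟨rfl, by linarith, by linear_combination e₁ + e₂, by linear_combination e₂⟩
  · rintro ⟨rfl, hy, hx, hu⟩
    exact ⟨by linear_combination hx - hu, by linear_combination hu, by linarith, by ring⟩

theorem fixedPoints_sisiV_beta2_zero (k₂ : ℝ) (hb : b ≠ 0) (hbα : b + α ≠ 0)
    (hc : β₁ * k₁ ≠ 0) :
    fixedPoints (sisiV b α β₁ 0 k₁ k₂) = {diseaseFreePoint, endemicPoint b α (β₁ * k₁)} := by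
  ext ⟨x, u, y, v⟩
  rw [mem_fixedPoints, isFixedPt_sisiV_beta2_zero_iff k₂ hb]
  simp only [mem_insert_iff, mem_singleton_iff, diseaseFreePoint, endemicPoint, Prod.mk.injEq]
  constructor
  · rintro ⟨rfl, hy, hx, hu⟩
    rcases mul_eq_zero.mp hu with rfl | hendemic
    · left
      have hy₀ : y = 0 := (mul_eq_zero.mp (by simpa using hy)).resolve_left hb
      have hx₁ : 1 - x = 0 := (mul_eq_zero.mp (by simpa using hx)).resolve_left hb
      exact ⟨by linarith, rfl, hy₀, rfl⟩
    · right
      have hcx : β₁ * k₁ * x = b + α := by linarith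
      have hcu : β₁ * k₁ * (b + α) * u = b * (β₁ * k₁ - b - α) := by
        linear_combination β₁ * k₁ * hx.symm - b * hcx
      have hcy : b * (β₁ * k₁ * (b + α) * y) = b * (α * (β₁ * k₁ - b - α)) := by
        linear_combination β₁ * k₁ * (b + α) * hy + α * hcu
      refine ⟨?_, ?_, ?_, rfl⟩
      · rw [eq_div_iff hc]; linarith
      · rw [eq_div_iff (mul_ne_zero hc hbα)]; linarith
      · rw [eq_div_iff (mul_ne_zero hc hbα)]; linarith [mul_left_cancel₀ hb hcy]
  · rintro (⟨rfl, rfl, rfl, rfl⟩ | ⟨rfl, rfl, rfl, rfl⟩)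
    · norm_num
    · have hβ₁ : β₁ ≠ 0 := left_ne_zero_of_mul hc
      have hk₁ : k₁ ≠ 0 := right_ne_zero_of_mul hc
      refine ⟨rfl, ?_, ?_, ?_⟩ <;> field_simp <;> ring

theorem endemicPoint_mem_simplexS3 {c : ℝ} (hb : 0 < b) (hα : 0 < α) (hgt : c > b + α) :
    endemicPoint b α c ∈ simplexS3 := by
  have hbα : 0 < b + α := by positivity
  have hc : 0 < c := hbα.trans hgt
  have hexcess : 0 < c - b - α := by linarith
  refine ⟨(div_pos hbα hc).le, (div_pos (mul_pos hb hexcess) (mul_pos hc hbα)).le,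
    (div_pos (mul_pos hα hexcess) (mul_pos hc hbα)).le, le_rfl, ?_⟩
  simp only [endemicPoint]
  field_simp
  ring

end FixedPoints

theorem fixedPoints_beta2_zero_general (b α β₁ β₂ k₁ k₂ : ℝ)
    (hβ₂ : β₂ = 0) (hb : 0 < b) (hα : 0 < α) (hgt : β₁ * k₁ > b + α) :
    {p : ℝ × ℝ × ℝ × ℝ | p ∈ simplexS3 ∧ sisiV b α β₁ β₂ k₁ k₂ p = p} =
      {((1 : ℝ), (0 : ℝ), (0 : ℝ), (0 : ℝ)),
       ((b + α) / (β₁ * k₁),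
        b * (β₁ * k₁ - b - α) / (β₁ * k₁ * (b + α)),
        α * (β₁ * k₁ - b - α) / (β₁ * k₁ * (b + α)),
        (0 : ℝ))} := by
  subst hβ₂
  have hbα : 0 < b + α := by positivity
  have hdiseaseFree : diseaseFreePoint ∈ simplexS3 := by norm_num [diseaseFreePoint, simplexS3]
  calc {p | p ∈ simplexS3 ∧ sisiV b α β₁ 0 k₁ k₂ p = p}
      = simplexS3 ∩ fixedPoints (sisiV b α β₁ 0 k₁ k₂) := rfl
    _ = simplexS3 ∩ {diseaseFreePoint, endemicPoint b α (β₁ * k₁)} := by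
      rw [fixedPoints_sisiV_beta2_zero k₂ hb.ne' hbα.ne' (hbα.trans hgt).ne']
    _ = {diseaseFreePoint, endemicPoint b α (β₁ * k₁)} :=
      inter_eq_right.mpr (insert_subset hdiseaseFree
        (singleton_subset_iff.mpr (endemicPoint_mem_simplexS3 hb hα hgt)))

theorem fixedPoints_beta2_zero (b α β₁ β₂ k₁ k₂ : ℝ)
    (hβ₂ : β₂ = 0) (hb : 0 < b) (hα : 0 < α) (hβ₁ : 0 < β₁)
    (hk₁ : 0 < k₁) (hk₂ : 0 < k₂) (hgt : β₁ * k₁ > b + α) :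
    {p : ℝ × ℝ × ℝ × ℝ | p ∈ simplexS3 ∧ sisiV b α β₁ β₂ k₁ k₂ p = p} =
      {((1 : ℝ), (0 : ℝ), (0 : ℝ), (0 : ℝ)),
       ((b + α) / (β₁ * k₁),
        b * (β₁ * k₁ - b - α) / (β₁ * k₁ * (b + α)),
        α * (β₁ * k₁ - b - α) / (β₁ * k₁ * (b + α)),
        (0 : ℝ))} :=
  fixedPoints_beta2_zero_general b α β₁ β₂ k₁ k₂ hβ₂ hb hα hgt
end

section
/- Suppose b, α, β₁, β₂, k₁, k₂ are all strictly positive and A > 0 solves equation (E). Then the point λ₁₇(A) = (b/(b+β₁A), bβ₁A/((b+β₁A)(b+α)), αbβ₁A/((b+β₁A)(b+β₂A)(b+α)), αβ₁β₂A²/((b+β₁A)(b+β₂A)(b+α))) lies in S³ and is a fixed point of V; moreover its infection force k₁·(second coordinate) + k₂·(fourth coordinate) equals A. -/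
/-- The interior fixed point candidate λ₁₇(A). -/
noncomputable def lam17 (b α β₁ β₂ A : ℝ) : ℝ × ℝ × ℝ × ℝ :=
  (b / (b + β₁ * A),
   b * β₁ * A / ((b + β₁ * A) * (b + α)),
   α * b * β₁ * A / ((b + β₁ * A) * (b + β₂ * A) * (b + α)),
   α * β₁ * β₂ * A ^ 2 / ((b + β₁ * A) * (b + β₂ * A) * (b + α)))

/-! Along `λ₁₇(A)` the infection force `k₁u + k₂v` is `A` times the right-hand side of (E), hence
equals `A`. With the force frozen at `A` the operator `V` is affine, and its fixed-point equations
form the cascade `x = b/(b+β₁A)`, `u = β₁Ax/(b+α)`, `y = αu/(b+β₂A)`, `v = β₂Ay/b`, which is exactly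
how the coordinates of `λ₁₇(A)` are built. -/

theorem sisiV_eq_self_iff {b α β₁ β₂ k₁ k₂ A x u y v : ℝ} (hforce : k₁ * u + k₂ * v = A) :
    sisiV b α β₁ β₂ k₁ k₂ (x, u, y, v) = (x, u, y, v) ↔
      b = (b + β₁ * A) * x ∧ β₁ * A * x = (b + α) * u ∧ α * u = (b + β₂ * A) * y ∧
        β₂ * A * y = b * v := by
  simp only [sisiV, hforce, Prod.mk.injEq]
  constructor
  · rintro ⟨hx, hu, hy, hv⟩
    exact ⟨by linarith, by linarith, by linarith, by linarith⟩
  · rintro ⟨hx, hu, hy, hv⟩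
    exact ⟨by linarith, by linarith, by linarith, by linarith⟩

section lam17

variable {b α β₁ β₂ A : ℝ}

theorem lam17_mem_simplexS3 (hb : 0 < b) (hα : 0 ≤ α) (hβ₁ : 0 ≤ β₁) (hβ₂ : 0 ≤ β₂)
    (hA : 0 ≤ A) : lam17 b α β₁ β₂ A ∈ simplexS3 := by
  have h₁ : b + β₁ * A ≠ 0 := by positivity
  have h₂ : b + β₂ * A ≠ 0 := by positivity
  have h₃ : b + α ≠ 0 := by positivity
  unfold lam17
  refine ⟨by positivity, by positivity, by positivity, by positivity, ?_⟩
  field_simp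
  ring

theorem lam17_infectionForce_eq {k₁ k₂ : ℝ} (h₁ : b + β₁ * A ≠ 0) (h₃ : b + α ≠ 0)
    (hE : eqE b α β₁ β₂ k₁ k₂ A) :
    k₁ * (lam17 b α β₁ β₂ A).2.1 + k₂ * (lam17 b α β₁ β₂ A).2.2.2 = A := by
  have hscale : k₁ * (lam17 b α β₁ β₂ A).2.1 + k₂ * (lam17 b α β₁ β₂ A).2.2.2 =
      A * (b * β₁ * k₁ / ((b + β₁ * A) * (b + α)) +
        α * β₁ * β₂ * k₂ * A / ((b + β₁ * A) * (b + β₂ * A) * (b + α))) := by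
    simp only [lam17]
    field_simp
  rw [hscale, ← hE, mul_one]

theorem lam17_cascade (h₁ : b + β₁ * A ≠ 0) (h₂ : b + β₂ * A ≠ 0) (h₃ : b + α ≠ 0) :
    let p := lam17 b α β₁ β₂ A
    b = (b + β₁ * A) * p.1 ∧ β₁ * A * p.1 = (b + α) * p.2.1 ∧
      α * p.2.1 = (b + β₂ * A) * p.2.2.1 ∧ β₂ * A * p.2.2.1 = b * p.2.2.2 := by
  simp only [lam17]
  refine ⟨by field_simp, by field_simp, ?_, by field_simp⟩
  rw [mul_div_assoc', mul_div_assoc', mul_comm (b + β₁ * A) (b + β₂ * A),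
    mul_assoc (b + β₂ * A), mul_div_mul_left _ _ h₂]
  ring

end lam17

theorem lam17_is_fixed_point_general (b α β₁ β₂ k₁ k₂ A : ℝ)
    (hb : 0 < b) (hα : 0 < α) (hβ₁ : 0 < β₁) (hβ₂ : 0 < β₂)
    (hA : 0 < A) (hE : eqE b α β₁ β₂ k₁ k₂ A) :
    lam17 b α β₁ β₂ A ∈ simplexS3 ∧
    sisiV b α β₁ β₂ k₁ k₂ (lam17 b α β₁ β₂ A) = lam17 b α β₁ β₂ A ∧
    k₁ * (lam17 b α β₁ β₂ A).2.1 + k₂ * (lam17 b α β₁ β₂ A).2.2.2 = A := by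
  have h₁ : b + β₁ * A ≠ 0 := by positivity
  have h₂ : b + β₂ * A ≠ 0 := by positivity
  have h₃ : b + α ≠ 0 := by positivity
  have hforce := lam17_infectionForce_eq h₁ h₃ hE
  exact ⟨lam17_mem_simplexS3 hb hα.le hβ₁.le hβ₂.le hA.le,
    (sisiV_eq_self_iff hforce).mpr (lam17_cascade h₁ h₂ h₃), hforce⟩

theorem lam17_is_fixed_point (b α β₁ β₂ k₁ k₂ A : ℝ)
    (hb : 0 < b) (hα : 0 < α) (hβ₁ : 0 < β₁) (hβ₂ : 0 < β₂)
    (hk₁ : 0 < k₁) (hk₂ : 0 < k₂)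
    (hA : 0 < A) (hE : eqE b α β₁ β₂ k₁ k₂ A) :
    lam17 b α β₁ β₂ A ∈ simplexS3 ∧
    sisiV b α β₁ β₂ k₁ k₂ (lam17 b α β₁ β₂ A) = lam17 b α β₁ β₂ A ∧
    k₁ * (lam17 b α β₁ β₂ A).2.1 + k₂ * (lam17 b α β₁ β₂ A).2.2.2 = A :=
  lam17_is_fixed_point_general b α β₁ β₂ k₁ k₂ A hb hα hβ₁ hβ₂ hA hE
end

section
/- Suppose β₂ = 0, b > 0, α > 0, β₁k₁ > b + α, and the nonnegative parameters b, α, β₁, β₂, k₁, k₂ satisfy conditions (C). Then there exists a neighborhood U of the fixed point λ₁₆ = ((b+α)/(β₁k₁), b(β₁k₁−b−α)/(β₁k₁(b+α)), α(β₁k₁−b−α)/(β₁k₁(b+α)), 0) such that for every initial point λ⁰ ∈ U ∩ S³ the sequence of iterates Vⁿ(λ⁰) converges to λ₁₆ as n → ∞. -/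
set_option maxHeartbeats 1600000

-- Lemma A: quadratic contraction for the 2x2 linear part
theorem quadContract (b α c : ℝ) (hb : 0 < b) (hα : 0 < α) (hab : α + b ≤ 1)
    (hc : 0 < c) (hcb : c * (α + b) ≤ b) :
    ∃ δ : ℝ, 0 < δ ∧ δ ≤ 1/2 ∧
      ∀ s η : ℝ, c * ((1-b)*s - α*η)^2 + α * (c*s + (1-c)*η)^2
        ≤ (1-δ) * (c*s^2 + α*η^2) := by
  have hb1 : b < 1 := by linarith
  have hc1 : c < 1 := by nlinarith
  have hac : α * c < b := by nlinarith
  set D1 : ℝ := c*(2*b - b^2 - α*c) with hD1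
  set D2 : ℝ := α*c*(2 - c - α) with hD2
  set O : ℝ := α*c*(c - b) with hO
  have hD1pos : 0 < D1 := by
    have h1 : 0 < 2*b - b^2 - α*c := by nlinarith
    rw [hD1]; positivity
  have hD2pos : 0 < D2 := by
    have h2 : 0 < 2 - c - α := by linarith
    rw [hD2]; positivity
  have hG : 0 < (2*b - b^2 - α*c)*(2 - c - α) - α*(c-b)^2 := by nlinarith
  have hdet : 0 < D1*D2 - O^2 := by
    have : D1*D2 - O^2 = c^2*α*((2*b - b^2 - α*c)*(2 - c - α) - α*(c-b)^2) := by
      rw [hD1, hD2, hO]; ring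
    rw [this]; positivity
  set δ₀ : ℝ := (D1*D2 - O^2)/(D1*α + D2*c) with hδ₀
  have hden : 0 < D1*α + D2*c := by positivity
  have hδ₀pos : 0 < δ₀ := by positivity
  refine ⟨min δ₀ (1/2), lt_min hδ₀pos (by norm_num), min_le_right _ _, ?_⟩
  set δ : ℝ := min δ₀ (1/2) with hδ
  have hδle : δ ≤ δ₀ := min_le_left _ _
  have hδpos : 0 < δ := lt_min hδ₀pos (by norm_num)
  have hf : (D1 - δ*c)*(D2 - δ*α) - O^2 ≥ 0 := by
    have h1 : δ * (D1*α + D2*c) ≤ D1*D2 - O^2 := by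
      calc δ * (D1*α + D2*c) ≤ δ₀ * (D1*α + D2*c) := by nlinarith
        _ = D1*D2 - O^2 := by rw [hδ₀]; exact div_mul_cancel₀ _ hden.ne'
    nlinarith [mul_pos hδpos hδpos, mul_pos hα hc]
  have hD1δ : 0 < D1 - δ*c := by
    have : δ₀ < D1/c := by
      rw [hδ₀, div_lt_div_iff₀ hden hc]
      nlinarith [mul_pos hD1pos hα, sq_nonneg O]
    have : δ < D1/c := lt_of_le_of_lt hδle this
    have := (lt_div_iff₀ hc).mp this
    linarith
  intro s η
  have key : (D1 - δ*c)*s^2 + 2*O*s*η + (D2 - δ*α)*η^2 ≥ 0 := by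
    nlinarith [sq_nonneg ((D1 - δ*c)*s + O*η), mul_nonneg hf.le (sq_nonneg η), hD1δ]
  have expand : (1-δ) * (c*s^2 + α*η^2) - (c * ((1-b)*s - α*η)^2 + α * (c*s + (1-c)*η)^2)
      = (D1 - δ*c)*s^2 + 2*O*s*η + (D2 - δ*α)*η^2 := by
    rw [hD1, hD2, hO]; ring
  linarith [expand ▸ key]


theorem young4 {δ : ℝ} (hδ : 0 < δ) (A N : ℝ) :
    (A+N)^2 ≤ (1+δ/4)*A^2 + (1+4/δ)*N^2 := by
  have h4' : δ*(4/δ) = 4 := by field_simp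
  nlinarith [sq_nonneg (δ*A - 4*N), sq_nonneg N, hδ]

theorem youngb {b : ℝ} (hb : 0 < b) (hb1 : b < 1) (Z Y : ℝ) :
    ((1-b)*Z + Y)^2 ≤ (1-b)*Z^2 + (1/b)*Y^2 := by
  have h4' : b*(1/b) = 1 := by field_simp
  nlinarith [mul_nonneg (by linarith : (0:ℝ) ≤ 1-b) (sq_nonneg (b*Z - Y)), sq_nonneg Y, hb]

theorem stepLemma (b α c δ R d xs K μ ρ θ : ℝ)
    (hb : 0 < b) (hb1 : b < 1) (hα : 0 < α) (hc : 0 < c)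
    (hδ : 0 < δ) (hK : 0 < K) (hμ : 0 < μ)
    (hcontr : ∀ s η : ℝ, c*((1-b)*s - α*η)^2 + α*(c*(s) + (1-c)*η)^2
        ≤ (1-δ)*(c*s^2 + α*η^2))
    (hρCw : ρ*(4*R^2*(1+4/δ)*(1/c+1/α)) ≤ δ/8)
    (hρca : ρ*(c+α) ≤ c*α)
    (hKC2 : α*(1+4/δ)*d^2*(4*xs^2+8) ≤ K*(b*(1-b)))
    (hμb : μ*α^2*(1/b) ≤ δ/8*α)
    (hθa : 1-δ/4 ≤ θ) (hθb : 1-b ≤ θ)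
    (ξ η ζ v : ℝ)
    (hp : c*(ξ+η)^2 + α*η^2 + K*v^2 + μ*ζ^2 ≤ ρ) :
    c*((1-b)*(ξ+η) - α*η)^2
      + α*((c*(ξ+η) + (1-c)*η) + (R*ξ*η + d*v*(xs+ξ)))^2
      + K*((1-b)*v)^2 + μ*((1-b)*ζ + α*η)^2
    ≤ θ*(c*(ξ+η)^2 + α*η^2 + K*v^2 + μ*ζ^2) := by
  have h0W : (0:ℝ) ≤ c*(ξ+η)^2 + α*η^2 := by positivity
  have h0s : (0:ℝ) ≤ c*(ξ+η)^2 := by positivity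
  have h0η : (0:ℝ) ≤ α*η^2 := by positivity
  have h1 : c*(ξ+η)^2 ≤ ρ := by
    nlinarith [mul_nonneg hα.le (sq_nonneg η), mul_nonneg hK.le (sq_nonneg v),
      mul_nonneg hμ.le (sq_nonneg ζ)]
  have h2 : α*η^2 ≤ ρ := by
    nlinarith [mul_nonneg hc.le (sq_nonneg (ξ+η)), mul_nonneg hK.le (sq_nonneg v),
      mul_nonneg hμ.le (sq_nonneg ζ)]
  have hξ2' : ξ^2 * (c*α) ≤ 2*ρ*(c+α) := by
    nlinarith [mul_nonneg (mul_pos hc hα).le (sq_nonneg (ξ+2*η)),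
      mul_le_mul_of_nonneg_left h1 hα.le, mul_le_mul_of_nonneg_left h2 hc.le]
  have hξ2 : ξ^2 ≤ 2 := by nlinarith [mul_pos hc hα]
  have pa1 : ξ^2 ≤ 2*ρ*(1/c+1/α) := by
    have hid : 2*ρ*(1/c+1/α) = 2*ρ*(c+α)/(c*α) := by
      rw [div_add_div _ _ hc.ne' hα.ne']; ring
    rw [hid, le_div_iff₀ (mul_pos hc hα)]
    linarith
  have pa2 : (1+4/δ)*(2*R^2)*ξ^2 ≤ δ/8 := by
    calc (1+4/δ)*(2*R^2)*ξ^2 ≤ (1+4/δ)*(2*R^2)*(2*ρ*(1/c+1/α)) := by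
          apply mul_le_mul_of_nonneg_left pa1; positivity
      _ = ρ*(4*R^2*(1+4/δ)*(1/c+1/α)) := by ring
      _ ≤ δ/8 := hρCw
  have pa3 : α*(1+4/δ)*(2*R^2*ξ^2*η^2) ≤ (δ/8)*(α*η^2) := by
    nlinarith [mul_le_mul_of_nonneg_left pa2 (mul_nonneg hα.le (sq_nonneg η))]
  have hxsξ : (xs+ξ)^2 ≤ 2*xs^2 + 4 := by nlinarith [sq_nonneg (xs-ξ)]
  have pb : α*(1+4/δ)*(2*(d*v)^2*(xs+ξ)^2) ≤ (α*(1+4/δ)*d^2*(4*xs^2+8))*v^2 := by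
    nlinarith [mul_le_mul_of_nonneg_left hxsξ
      (show (0:ℝ) ≤ α*(1+4/δ)*d^2*v^2 by positivity)]
  have hN2 : (R*ξ*η + d*v*(xs+ξ))^2 ≤ 2*R^2*ξ^2*η^2 + 2*(d*v)^2*(xs+ξ)^2 := by
    nlinarith [sq_nonneg (R*ξ*η - d*v*(xs+ξ))]
  -- abstract the big subexpressions as opaque variables
  obtain ⟨N, hNdef⟩ : ∃ x : ℝ, x = R*ξ*η + d*v*(xs+ξ) := ⟨_, rfl⟩
  obtain ⟨A, hAdef⟩ : ∃ x : ℝ, x = c*(ξ+η) + (1-c)*η := ⟨_, rfl⟩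
  obtain ⟨S, hSdef⟩ : ∃ x : ℝ, x = (1-b)*(ξ+η) - α*η := ⟨_, rfl⟩
  obtain ⟨Z, hZdef⟩ : ∃ x : ℝ, x = (1-b)*ζ + α*η := ⟨_, rfl⟩
  obtain ⟨W1, hW1def⟩ : ∃ x : ℝ, x = c*(ξ+η)^2 := ⟨_, rfl⟩
  obtain ⟨W2, hW2def⟩ : ∃ x : ℝ, x = α*η^2 := ⟨_, rfl⟩
  obtain ⟨Y1, hY1def⟩ : ∃ x : ℝ, x = 2*R^2*ξ^2*η^2 := ⟨_, rfl⟩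
  obtain ⟨Y2, hY2def⟩ : ∃ x : ℝ, x = 2*(d*v)^2*(xs+ξ)^2 := ⟨_, rfl⟩
  obtain ⟨C2e, hC2edef⟩ : ∃ x : ℝ, x = α*(1+4/δ)*d^2*(4*xs^2+8) := ⟨_, rfl⟩
  rw [← hNdef, ← hAdef, ← hSdef, ← hZdef, ← hW1def, ← hW2def]
  rw [← hY1def] at pa3 hN2
  rw [← hY2def] at pb hN2
  rw [← hNdef] at hN2
  rw [← hC2edef] at pb
  rw [← hC2edef] at hKC2
  rw [← hW1def] at h0W h1 hp h0s
  rw [← hW2def] at h0W h2 hp h0η pa3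
  have hNb : α*(1+4/δ)*N^2 ≤ (δ/8)*W2 + C2e*v^2 := by
    have h3 := mul_le_mul_of_nonneg_left hN2 (show (0:ℝ) ≤ α*(1+4/δ) by positivity)
    linarith [pa3, pb]
  have hYoung : α*((A + N)^2) ≤ (1+δ/4)*(α*A^2) + α*(1+4/δ)*N^2 := by
    have := mul_le_mul_of_nonneg_left (young4 hδ A N) hα.le
    linarith
  have hLin : c*S^2 + α*A^2 ≤ (1-δ)*(W1+W2) := by
    have h4 := hcontr (ξ+η) η
    rw [← hW1def, ← hW2def, ← hAdef, ← hSdef] at h4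
    linarith
  have hLin4 : (1+δ/4)*(c*S^2 + α*A^2) ≤ (1+δ/4)*((1-δ)*(W1+W2)) := by
    apply mul_le_mul_of_nonneg_left hLin; positivity
  have hLin5 : (1+δ/4)*((1-δ)*(W1+W2)) ≤ (1-δ/2)*(W1+W2) := by
    have h10 : (0:ℝ) ≤ W1+W2 := by linarith
    have h11 : (1+δ/4)*((1-δ)*(W1+W2)) = (1-δ/2)*(W1+W2) - (δ/4+δ^2/4)*(W1+W2) := by
      ring
    have h12 : (0:ℝ) ≤ (δ/4+δ^2/4)*(W1+W2) :=
      mul_nonneg (by positivity) h10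
    linarith
  have habs : (0:ℝ) ≤ (δ/4)*(c*S^2) := by positivity
  have hζY : μ*Z^2 ≤ μ*((1-b)*ζ^2) + (δ/8)*W2 := by
    have h5 := mul_le_mul_of_nonneg_left (youngb hb hb1 ζ (α*η)) hμ.le
    have h7 := mul_le_mul_of_nonneg_right hμb (sq_nonneg η)
    rw [hZdef, hW2def]
    linarith [h5, h7]
  have hv : (K*(1-b)^2)*v^2 + C2e*v^2 ≤ θ*(K*v^2) := by
    have h8 : K*(1-b)^2 + C2e ≤ K*(1-b) := by linarith [hKC2]
    have h9 : K*(1-b) ≤ K*θ := mul_le_mul_of_nonneg_left hθb hK.le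
    linarith [mul_le_mul_of_nonneg_right (le_trans h8 h9) (sq_nonneg v)]
  have hW : (1-δ/4)*(W1+W2) ≤ θ*(W1+W2) :=
    mul_le_mul_of_nonneg_right hθa (by linarith)
  have hζf : μ*((1-b)*ζ^2) ≤ θ*(μ*ζ^2) := by
    linarith [mul_le_mul_of_nonneg_right hθb (mul_nonneg hμ.le (sq_nonneg ζ))]
  linarith [hYoung, hNb, hLin4, hLin5, habs, hζY, hv, hW, hζf, h0η, mul_nonneg hδ.le h0s, mul_nonneg hδ.le h0η]


noncomputable def auxV (b α R d : ℝ) (p : ℝ × ℝ × ℝ × ℝ) : ℝ × ℝ × ℝ × ℝ :=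
  (p.1 + b - b * p.1 - (R * p.2.1 + d * p.2.2.2) * p.1,
   p.2.1 - b * p.2.1 - α * p.2.1 + (R * p.2.1 + d * p.2.2.2) * p.1,
   p.2.2.1 - b * p.2.2.1 + α * p.2.1,
   p.2.2.2 - b * p.2.2.2)

noncomputable def auxPhi (c α K μ xs us ys : ℝ) (p : ℝ × ℝ × ℝ × ℝ) : ℝ :=
  c * ((p.1 - xs) + (p.2.1 - us))^2 + α * (p.2.1 - us)^2
    + K * p.2.2.2^2 + μ * (p.2.2.1 - ys)^2

theorem sq_dom_tendsto {f g : ℕ → ℝ} {κ : ℝ} (hκ : 0 < κ)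
    (h : ∀ n, κ * (f n)^2 ≤ g n)
    (hg : Filter.Tendsto g Filter.atTop (nhds 0)) :
    Filter.Tendsto f Filter.atTop (nhds 0) := by
  have h2 : Filter.Tendsto (fun n => (f n)^2) Filter.atTop (nhds 0) := by
    apply squeeze_zero (fun n => sq_nonneg _) (fun n => ?_)
    · simpa using hg.div_const κ
    · rw [le_div_iff₀ hκ]; linarith [h n]
  have habs : Filter.Tendsto (fun n => |f n|) Filter.atTop (nhds 0) := by
    have h3 : Filter.Tendsto (fun n => Real.sqrt ((f n)^2)) Filter.atTop
        (nhds (Real.sqrt 0)) := (Real.continuous_sqrt.tendsto 0).comp h2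
    simpa [Real.sqrt_sq_eq_abs] using h3
  exact tendsto_of_tendsto_of_tendsto_of_le_of_le (by simpa using habs.neg) habs
    (fun n => neg_abs_le _) (fun n => le_abs_self _)

theorem sisiAux (b α R d xs us ys : ℝ) (hb : 0 < b) (hα : 0 < α) (hab : α + b ≤ 1)
    (hR : 0 < R) (hd : 0 ≤ d)
    (hxs : R * xs = b + α) (hus : (b + α) * us = b * (1 - xs)) (hys : b * ys = α * us)
    (huspos : 0 < us) (hcb : (R * us) * (α + b) ≤ b) :
    ∃ U : Set (ℝ × ℝ × ℝ × ℝ), U ∈ nhds (xs, us, ys, (0:ℝ)) ∧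
      ∀ p ∈ U, Filter.Tendsto (fun n => (auxV b α R d)^[n] p) Filter.atTop
        (nhds (xs, us, ys, (0:ℝ))) := by
  have hb1 : b < 1 := by linarith
  obtain ⟨c, hcdef⟩ : ∃ x : ℝ, x = R * us := ⟨_, rfl⟩
  have hc : 0 < c := hcdef ▸ mul_pos hR huspos
  have hcb' : c * (α + b) ≤ b := hcdef ▸ hcb
  obtain ⟨δ, hδpos, hδhalf, hcontr⟩ := quadContract b α c hb hα hab hc hcb'
  have hbb : 0 < b * (1-b) := mul_pos hb (by linarith)
  have h4δ : (0:ℝ) < 1 + 4/δ := by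
    have := div_pos (by norm_num : (0:ℝ) < 4) hδpos; linarith
  have h1c : (0:ℝ) < 1/c + 1/α := by
    have := one_div_pos.mpr hc; have := one_div_pos.mpr hα; linarith
  have hR2 : (0:ℝ) < R^2 := pow_pos hR 2
  have hCw : (0:ℝ) < 4*R^2*(1+4/δ)*(1/c+1/α) := by
    apply mul_pos (mul_pos (by linarith) h4δ) h1c
  obtain ⟨K, hKdef⟩ : ∃ x : ℝ, x = α*(1+4/δ)*d^2*(4*xs^2+8)/(b*(1-b)) + 1 := ⟨_, rfl⟩
  have hC2nn : (0:ℝ) ≤ α*(1+4/δ)*d^2*(4*xs^2+8) := by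
    apply mul_nonneg (mul_nonneg (mul_nonneg hα.le h4δ.le) (sq_nonneg d)); positivity
  have hK : 0 < K := by
    rw [hKdef]
    have := div_nonneg hC2nn hbb.le; linarith
  have hKC2 : α*(1+4/δ)*d^2*(4*xs^2+8) ≤ K*(b*(1-b)) := by
    rw [hKdef]
    have he : (α*(1+4/δ)*d^2*(4*xs^2+8)/(b*(1-b)) + 1)*(b*(1-b))
        = α*(1+4/δ)*d^2*(4*xs^2+8) + b*(1-b) := by rw [div_add_one hbb.ne', div_mul_cancel₀ _ hbb.ne']
    rw [he]; linarith
  obtain ⟨μ, hμdef⟩ : ∃ x : ℝ, x = δ*b/(8*α) := ⟨_, rfl⟩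
  have hμ : 0 < μ := by rw [hμdef]; positivity
  have hμb : μ*α^2*(1/b) ≤ δ/8*α := by
    rw [hμdef]
    apply le_of_eq
    field_simp
  obtain ⟨ρ, hρdef⟩ : ∃ x : ℝ,
      x = min (δ/(8*(4*R^2*(1+4/δ)*(1/c+1/α)))) (c*α/(c+α)) := ⟨_, rfl⟩
  have hρ : 0 < ρ := by
    rw [hρdef]
    exact lt_min (div_pos hδpos (by linarith)) (div_pos (mul_pos hc hα) (by linarith))
  have hρCw : ρ*(4*R^2*(1+4/δ)*(1/c+1/α)) ≤ δ/8 := by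
    have h5 : ρ ≤ δ/(8*(4*R^2*(1+4/δ)*(1/c+1/α))) := hρdef ▸ min_le_left _ _
    rw [le_div_iff₀ (by linarith)] at h5
    linarith
  have hρca : ρ*(c+α) ≤ c*α := by
    have h5 : ρ ≤ c*α/(c+α) := hρdef ▸ min_le_right _ _
    rw [le_div_iff₀ (by linarith)] at h5
    exact h5
  obtain ⟨θ, hθdef⟩ : ∃ x : ℝ, x = max (1-δ/4) (1-b) := ⟨_, rfl⟩
  have hθ0 : 0 ≤ θ := by
    rw [hθdef]; exact le_trans (by linarith) (le_max_left _ _)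
  have hθ1 : θ < 1 := by
    rw [hθdef]; exact max_lt (by linarith) (by linarith)
  have hθa : 1-δ/4 ≤ θ := hθdef ▸ le_max_left _ _
  have hθb : 1-b ≤ θ := hθdef ▸ le_max_right _ _
  have hΦ0 : ∀ p, 0 ≤ auxPhi c α K μ xs us ys p := by
    intro p; unfold auxPhi
    have t1 := mul_nonneg hc.le (sq_nonneg ((p.1 - xs) + (p.2.1 - us)))
    have t2 := mul_nonneg hα.le (sq_nonneg (p.2.1 - us))
    have t3 := mul_nonneg hK.le (sq_nonneg p.2.2.2)
    have t4 := mul_nonneg hμ.le (sq_nonneg (p.2.2.1 - ys))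
    linarith
  -- one-step contraction
  have hstep : ∀ p : ℝ × ℝ × ℝ × ℝ, auxPhi c α K μ xs us ys p ≤ ρ →
      auxPhi c α K μ xs us ys (auxV b α R d p) ≤ θ * auxPhi c α K μ xs us ys p := by
    rintro ⟨x, u, y, v⟩ hp
    have hq : auxV b α R d (x,u,y,v) =
      (xs + (((1-b)*((x-xs)+(u-us)) - α*(u-us))
          - ((c*((x-xs)+(u-us)) + (1-c)*(u-us)) + (R*(x-xs)*(u-us) + d*v*(xs+(x-xs))))),
       us + ((c*((x-xs)+(u-us)) + (1-c)*(u-us)) + (R*(x-xs)*(u-us) + d*v*(xs+(x-xs)))),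
       ys + ((1-b)*(y-ys) + α*(u-us)),
       (1-b)*v) := by
      unfold auxV
      simp only [Prod.mk.injEq]
      refine ⟨?_, ?_, ?_, ?_⟩
      · linear_combination (-1 : ℝ)*hus - u*hxs + (x-xs)*hcdef
      · linear_combination u*hxs - (x-xs)*hcdef
      · linear_combination -hys
      · ring
    rw [hq]
    unfold auxPhi at hp ⊢
    simp only at hp ⊢
    have key := stepLemma b α c δ R d xs K μ ρ θ hb hb1 hα hc hδpos hK hμ hcontr
      hρCw hρca hKC2 hμb hθa hθb (x-xs) (u-us) (y-ys) v (by linarith [hp])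
    linarith [key]
  refine ⟨{p | auxPhi c α K μ xs us ys p < ρ}, ?_, ?_⟩
  · have hcont : Continuous (auxPhi c α K μ xs us ys) := by
      unfold auxPhi; fun_prop
    have hopen : IsOpen {p : ℝ×ℝ×ℝ×ℝ | auxPhi c α K μ xs us ys p < ρ} :=
      isOpen_lt hcont continuous_const
    apply hopen.mem_nhds
    show auxPhi c α K μ xs us ys (xs, us, ys, 0) < ρ
    have hz : auxPhi c α K μ xs us ys (xs, us, ys, 0) = 0 := by
      unfold auxPhi; norm_num
    rw [hz]; exact hρ
  · intro p hp
    simp only [Set.mem_setOf_eq] at hp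
    have hiter : ∀ n,
        auxPhi c α K μ xs us ys ((auxV b α R d)^[n] p)
          ≤ θ^n * auxPhi c α K μ xs us ys p
        ∧ auxPhi c α K μ xs us ys ((auxV b α R d)^[n] p) ≤ ρ := by
      intro n; induction n with
      | zero =>
        rw [Function.iterate_zero_apply, pow_zero, one_mul]
        exact ⟨le_refl _, hp.le⟩
      | succ n ih =>
        rw [Function.iterate_succ_apply']
        have h1 := hstep _ ih.2
        constructor
        · have h2 : θ * auxPhi c α K μ xs us ys ((auxV b α R d)^[n] p)
              ≤ θ * (θ^n * auxPhi c α K μ xs us ys p) :=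
            mul_le_mul_of_nonneg_left ih.1 hθ0
          have h3 : θ * (θ^n * auxPhi c α K μ xs us ys p)
              = θ^(n+1) * auxPhi c α K μ xs us ys p := by ring
          linarith
        · have h2 : θ * auxPhi c α K μ xs us ys ((auxV b α R d)^[n] p) ≤ 1 * ρ :=
            mul_le_mul hθ1.le ih.2 (hΦ0 _) zero_le_one
          linarith
    have hglim : Filter.Tendsto (fun n => θ^n * auxPhi c α K μ xs us ys p)
        Filter.atTop (nhds 0) := by
      have h4 := (tendsto_pow_atTop_nhds_zero_of_lt_one hθ0 hθ1).mul_const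
        (auxPhi c α K μ xs us ys p)
      simpa using h4
    have hΦlim : Filter.Tendsto
        (fun n => auxPhi c α K μ xs us ys ((auxV b α R d)^[n] p))
        Filter.atTop (nhds 0) :=
      squeeze_zero (fun n => hΦ0 _) (fun n => (hiter n).1) hglim
    have hsb : ∀ q : ℝ×ℝ×ℝ×ℝ, c * ((q.1 - xs) + (q.2.1 - us))^2
        ≤ auxPhi c α K μ xs us ys q := by
      intro q; unfold auxPhi
      have t2 := mul_nonneg hα.le (sq_nonneg (q.2.1 - us))
      have t3 := mul_nonneg hK.le (sq_nonneg q.2.2.2)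
      have t4 := mul_nonneg hμ.le (sq_nonneg (q.2.2.1 - ys))
      linarith
    have hηb : ∀ q : ℝ×ℝ×ℝ×ℝ, α * (q.2.1 - us)^2 ≤ auxPhi c α K μ xs us ys q := by
      intro q; unfold auxPhi
      have t1 := mul_nonneg hc.le (sq_nonneg ((q.1 - xs) + (q.2.1 - us)))
      have t3 := mul_nonneg hK.le (sq_nonneg q.2.2.2)
      have t4 := mul_nonneg hμ.le (sq_nonneg (q.2.2.1 - ys))
      linarith
    have hvb : ∀ q : ℝ×ℝ×ℝ×ℝ, K * q.2.2.2^2 ≤ auxPhi c α K μ xs us ys q := by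
      intro q; unfold auxPhi
      have t1 := mul_nonneg hc.le (sq_nonneg ((q.1 - xs) + (q.2.1 - us)))
      have t2 := mul_nonneg hα.le (sq_nonneg (q.2.1 - us))
      have t4 := mul_nonneg hμ.le (sq_nonneg (q.2.2.1 - ys))
      linarith
    have hζb : ∀ q : ℝ×ℝ×ℝ×ℝ, μ * (q.2.2.1 - ys)^2 ≤ auxPhi c α K μ xs us ys q := by
      intro q; unfold auxPhi
      have t1 := mul_nonneg hc.le (sq_nonneg ((q.1 - xs) + (q.2.1 - us)))
      have t2 := mul_nonneg hα.le (sq_nonneg (q.2.1 - us))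
      have t3 := mul_nonneg hK.le (sq_nonneg q.2.2.2)
      linarith
    have hs : Filter.Tendsto
        (fun n => (((auxV b α R d)^[n] p).1 - xs) + (((auxV b α R d)^[n] p).2.1 - us))
        Filter.atTop (nhds 0) :=
      sq_dom_tendsto hc (fun n => hsb ((auxV b α R d)^[n] p)) hΦlim
    have hη : Filter.Tendsto (fun n => ((auxV b α R d)^[n] p).2.1 - us)
        Filter.atTop (nhds 0) :=
      sq_dom_tendsto hα (fun n => hηb ((auxV b α R d)^[n] p)) hΦlim
    have hv : Filter.Tendsto (fun n => ((auxV b α R d)^[n] p).2.2.2)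
        Filter.atTop (nhds 0) :=
      sq_dom_tendsto hK (fun n => hvb ((auxV b α R d)^[n] p)) hΦlim
    have hζ : Filter.Tendsto (fun n => ((auxV b α R d)^[n] p).2.2.1 - ys)
        Filter.atTop (nhds 0) :=
      sq_dom_tendsto hμ (fun n => hζb ((auxV b α R d)^[n] p)) hΦlim
    have hξ : Filter.Tendsto
        (fun n => ((((auxV b α R d)^[n] p).1 - xs) + (((auxV b α R d)^[n] p).2.1 - us))
          - (((auxV b α R d)^[n] p).2.1 - us)) Filter.atTop (nhds 0) := by
      simpa using hs.sub hη
    have hx : Filter.Tendsto (fun n => ((auxV b α R d)^[n] p).1)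
        Filter.atTop (nhds xs) := by
      have h7 : (fun n => ((auxV b α R d)^[n] p).1)
          = fun n => (((((auxV b α R d)^[n] p).1 - xs) + (((auxV b α R d)^[n] p).2.1 - us))
            - (((auxV b α R d)^[n] p).2.1 - us)) + xs := by
        funext n; ring
      rw [h7]; simpa using hξ.add_const xs
    have hu : Filter.Tendsto (fun n => ((auxV b α R d)^[n] p).2.1)
        Filter.atTop (nhds us) := by
      have h8 : (fun n => ((auxV b α R d)^[n] p).2.1)
          = fun n => (((auxV b α R d)^[n] p).2.1 - us) + us := by funext n; ring
      rw [h8]; simpa using hη.add_const us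
    have hy : Filter.Tendsto (fun n => ((auxV b α R d)^[n] p).2.2.1)
        Filter.atTop (nhds ys) := by
      have h9 : (fun n => ((auxV b α R d)^[n] p).2.2.1)
          = fun n => (((auxV b α R d)^[n] p).2.2.1 - ys) + ys := by funext n; ring
      rw [h9]; simpa using hζ.add_const ys
    exact hx.prodMk_nhds (hu.prodMk_nhds (hy.prodMk_nhds hv))



theorem lam16_locally_attracting (b α β₁ β₂ k₁ k₂ : ℝ)
    (hβ₂ : β₂ = 0) (hb : 0 < b) (hα : 0 < α)
    (hβ₁ : 0 ≤ β₁) (hk₁ : 0 ≤ k₁) (hk₂ : 0 ≤ k₂)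
    (hgt : β₁ * k₁ > b + α) (hC : condC b α β₁ β₂ k₁ k₂) :
    ∃ U : Set (ℝ × ℝ × ℝ × ℝ),
      U ∈ nhds (((b + α) / (β₁ * k₁),
                 b * (β₁ * k₁ - b - α) / (β₁ * k₁ * (b + α)),
                 α * (β₁ * k₁ - b - α) / (β₁ * k₁ * (b + α)),
                 (0 : ℝ)) : ℝ × ℝ × ℝ × ℝ) ∧
      ∀ lam0 ∈ U ∩ simplexS3,
        Filter.Tendsto (fun n => (sisiV b α β₁ β₂ k₁ k₂)^[n] lam0)
          Filter.atTop
          (nhds (((b + α) / (β₁ * k₁),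
                  b * (β₁ * k₁ - b - α) / (β₁ * k₁ * (b + α)),
                  α * (β₁ * k₁ - b - α) / (β₁ * k₁ * (b + α)),
                  (0 : ℝ)) : ℝ × ℝ × ℝ × ℝ)) := by
  have hab : α + b ≤ 1 := hC.1
  have habs : |α + b - β₁ * k₁| ≤ 1 := hC.2.2.2.2.2.2.2.1
  have he1 : β₁ * k₁ - b - α ≤ 1 := by
    have h0 := (abs_le.mp habs).1; linarith
  have hepos : 0 < β₁ * k₁ - b - α := by linarith
  have hR : 0 < β₁ * k₁ := by linarith
  have hbα : 0 < b + α := by linarith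
  have hβ₁0 : β₁ ≠ 0 := by rintro rfl; simp at hR
  have hk₁0 : k₁ ≠ 0 := by rintro rfl; simp at hR
  obtain ⟨U, hU, hconv⟩ := sisiAux b α (β₁*k₁) (β₁*k₂)
    ((b + α) / (β₁ * k₁))
    (b * (β₁ * k₁ - b - α) / (β₁ * k₁ * (b + α)))
    (α * (β₁ * k₁ - b - α) / (β₁ * k₁ * (b + α)))
    hb hα hab hR (mul_nonneg hβ₁ hk₂)
    (by field_simp)
    (by field_simp; ring)
    (by field_simp)
    (div_pos (mul_pos hb hepos) (mul_pos hR hbα))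
    (by
      have hid : (β₁*k₁) * (b * (β₁ * k₁ - b - α) / (β₁ * k₁ * (b + α))) * (α+b)
          = b * (β₁ * k₁ - b - α) := by field_simp; ring
      rw [hid]; nlinarith)
  have hVeq : sisiV b α β₁ β₂ k₁ k₂ = auxV b α (β₁*k₁) (β₁*k₂) := by
    funext p; unfold sisiV auxV; rw [hβ₂]
    simp only [Prod.mk.injEq]
    exact ⟨by ring, by ring, by ring, by ring⟩
  exact ⟨U, hU, fun lam0 hl => by rw [hVeq]; exact hconv lam0 hl.1⟩
end

section
/- Suppose b > 0, α > 0, β₁k₁ > b + α, α + b ≤ 1, and β₁k₁ ≤ 1 + b. Set A = b(β₁k₁−b−α)/(β₁(b+α)) and x* = (b+α)/(β₁k₁). Then every complex eigenvalue μ of the 4×4 real matrix J = [[1−b−β₁A, −β₁k₁x*, 0, −β₁k₂x*], [β₁A, 1−b−α+β₁k₁x*, 0, β₁k₂x*], [0, α, 1−b, 0], [0, 0, 0, 1−b]] satisfies |μ| < 1. -/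
/-!
The characteristic polynomial of `J` factors as `(X - (1 - b))² q(X)`, where, with `a = β₁ A`,
`q(X) = X² - (2 - b - a) X + (1 - b - a + (b + α) a)`. The double root `1 - b` lies in `(0, 1)`,
and `q` satisfies the Schur–Cohn (Jury) conditions `|q(0)| < 1`, `q(1) = (b + α) a > 0`, `q(-1) > 0`,
the last two because `0 < a < 1`.
-/

open Polynomial

theorem Matrix.charpoly_fin_four_block {R : Type*} [CommRing R] (a b c d e f g h i : R) :
    (!![a, b, 0, c; d, e, 0, f; 0, g, h, 0; 0, 0, 0, i]).charpoly =
      (X - C h) * (X - C i) * ((X - C a) * (X - C e) - C (b * d)) := by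
  rw [Matrix.charpoly, Matrix.det_succ_row_zero]
  simp only [Matrix.charmatrix_apply, Matrix.of_apply, Matrix.det_fin_three,
    Matrix.submatrix_apply, Fin.succAbove, Matrix.cons_val, Fin.reduceSucc, Fin.reduceCastSucc,
    Fin.sum_univ_succ, Fin.coe_ofNat_eq_mod, Matrix.diagonal_apply_eq, ↓reduceIte, ne_eq,
    Fin.reduceEq, not_false_eq_true, Matrix.diagonal_apply_ne, map_zero, Fin.reduceLT, map_mul]
  ring

theorem abs_lt_one_of_sq_sub_mul_add_eq_zero {T D x : ℝ} (hx : x ^ 2 - T * x + D = 0)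
    (hT : |T| < 1 + D) (hD : D < 1) : |x| < 1 := by
  obtain ⟨hT₁, hT₂⟩ := abs_lt.mp hT
  rw [abs_lt]
  constructor <;> nlinarith

theorem Complex.norm_lt_one_of_sq_sub_mul_add_eq_zero {T D : ℝ} {z : ℂ}
    (hz : z ^ 2 - T * z + D = 0) (hT : |T| < 1 + D) (hD : D < 1) : ‖z‖ < 1 := by
  have hre : z.re ^ 2 - z.im ^ 2 - T * z.re + D = 0 := by
    simpa [sq] using congrArg Complex.re hz
  have him : z.im * (2 * z.re - T) = 0 := by
    have := congrArg Complex.im hz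
    simp only [sq, Complex.add_im, Complex.sub_im, Complex.mul_im, Complex.ofReal_re,
      Complex.ofReal_im, zero_mul, add_zero, Complex.zero_im] at this
    linear_combination this
  rcases mul_eq_zero.mp him with hreal | hT_eq
  · rw [← Complex.re_add_im z, hreal, Complex.ofReal_zero, zero_mul, add_zero,
      Complex.norm_real, Real.norm_eq_abs]
    exact abs_lt_one_of_sq_sub_mul_add_eq_zero (by linear_combination hre + z.im * hreal) hT hD
  · -- non-real roots come in a conjugate pair, so `‖z‖²` is the product of the roots
    have hnorm : ‖z‖ ^ 2 = D := by
      rw [Complex.sq_norm, Complex.normSq_apply]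
      linear_combination -hre + z.re * hT_eq
    exact (sq_lt_one_iff₀ (norm_nonneg z)).mp (hnorm ▸ hD)

theorem jacobian_eigenvalues_in_unit_disc_general (b α β₁ k₁ k₂ A xs : ℝ)
    (hb : 0 < b) (hα : 0 < α)
    (hgt : β₁ * k₁ > b + α) (h1 : α + b ≤ 1) (h2 : β₁ * k₁ ≤ 1 + b)
    (hA : A = b * (β₁ * k₁ - b - α) / (β₁ * (b + α)))
    (hxs : xs = (b + α) / (β₁ * k₁)) :
    ∀ μ : ℂ,
      (Matrix.charpoly
        ((!![1 - b - β₁ * A, -(β₁ * k₁ * xs), 0, -(β₁ * k₂ * xs);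
             β₁ * A, 1 - b - α + β₁ * k₁ * xs, 0, β₁ * k₂ * xs;
             0, α, 1 - b, 0;
             0, 0, 0, 1 - b] : Matrix (Fin 4) (Fin 4) ℝ).map
          (fun r => (r : ℂ)))).IsRoot μ →
      ‖μ‖ < 1 := by
  intro μ hμ
  have hβk : β₁ * k₁ ≠ 0 := by linarith
  set a := β₁ * A with ha
  have ha' : a * (b + α) = b * (β₁ * k₁ - b - α) := by
    rw [ha, hA]
    field_simp [left_ne_zero_of_mul hβk]
  have hxs' : β₁ * k₁ * xs = b + α := by rw [hxs, mul_div_cancel₀ _ hβk]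
  have hb1 : b < 1 := by linarith
  have ha_pos : 0 < a := by nlinarith
  have ha1 : a < 1 := by nlinarith
  rw [hxs', ← funext Complex.ofRealHom_eq_coe, Matrix.charpoly_map,
    Matrix.charpoly_fin_four_block] at hμ
  simp only [IsRoot, eval_map, eval₂_mul, eval₂_sub, eval₂_X, eval₂_C, mul_eq_zero,
    sub_eq_zero, or_self, Complex.ofRealHom_eq_coe] at hμ
  rcases hμ with hμ | hquad
  · rw [hμ, Complex.norm_real, Real.norm_eq_abs, abs_lt]
    constructor <;> linarith
  · refine Complex.norm_lt_one_of_sq_sub_mul_add_eq_zero (T := 2 - b - a)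
      (D := 1 - b - a + (b + α) * a) ?_ ?_ (by nlinarith)
    · push_cast at hquad ⊢
      linear_combination hquad
    · rw [abs_lt]
      constructor <;> nlinarith

theorem jacobian_eigenvalues_in_unit_disc (b α β₁ k₁ k₂ A xs : ℝ)
    (hb : 0 < b) (hα : 0 < α)
    (hβ₁ : 0 ≤ β₁) (hk₁ : 0 ≤ k₁) (hk₂ : 0 ≤ k₂)
    (hgt : β₁ * k₁ > b + α) (h1 : α + b ≤ 1) (h2 : β₁ * k₁ ≤ 1 + b)
    (hA : A = b * (β₁ * k₁ - b - α) / (β₁ * (b + α)))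
    (hxs : xs = (b + α) / (β₁ * k₁)) :
    ∀ μ : ℂ,
      (Matrix.charpoly
        ((!![1 - b - β₁ * A, -(β₁ * k₁ * xs), 0, -(β₁ * k₂ * xs);
             β₁ * A, 1 - b - α + β₁ * k₁ * xs, 0, β₁ * k₂ * xs;
             0, α, 1 - b, 0;
             0, 0, 0, 1 - b] : Matrix (Fin 4) (Fin 4) ℝ).map
          (fun r => (r : ℂ)))).IsRoot μ →
      ‖μ‖ < 1 :=
  jacobian_eigenvalues_in_unit_disc_general b α β₁ k₁ k₂ A xs hb hα hgt h1 h2 hA hxs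
end

section
/- Suppose b > 0, α > 0, β₁k₁ > b + α, α + b ≤ 1, and β₁k₁ ≤ 1 + b. Set A = b(β₁k₁−b−α)/(β₁(b+α)), and suppose the discriminant D = (b−β₁A)² − 4β₁Aα is nonnegative. Then both real roots of the quadratic equation μ² − (2−b−β₁A)μ + β₁Aα + (1−b)(1−β₁A) = 0, namely μ = (2−b−β₁A ± √D)/2, lie strictly between −1 and 1. -/
theorem real_roots_in_unit_interval (b α β₁ k₁ A : ℝ)
    (hb : 0 < b) (hα : 0 < α)
    (hgt : β₁ * k₁ > b + α) (h1 : α + b ≤ 1) (h2 : β₁ * k₁ ≤ 1 + b)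
    (hA : A = b * (β₁ * k₁ - b - α) / (β₁ * (b + α)))
    (hD : 0 ≤ (b - β₁ * A) ^ 2 - 4 * β₁ * A * α) :
    ∀ μ ∈ ({(2 - b - β₁ * A - Real.sqrt ((b - β₁ * A) ^ 2 - 4 * β₁ * A * α)) / 2,
            (2 - b - β₁ * A + Real.sqrt ((b - β₁ * A) ^ 2 - 4 * β₁ * A * α)) / 2} :
            Set ℝ),
      μ ^ 2 - (2 - b - β₁ * A) * μ + β₁ * A * α + (1 - b) * (1 - β₁ * A) = 0 ∧
      -1 < μ ∧ μ < 1 := by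
  have hba : 0 < b + α := by linarith
  have hβ : β₁ ≠ 0 := by
    rintro rfl
    simp at hgt
    linarith
  have hP : β₁ * A = b * (β₁ * k₁ - b - α) / (b + α) := by
    rw [hA]; field_simp
  have hre : ∀ x : ℝ, x ^ 2 - 4 * β₁ * A * α = x ^ 2 - 4 * (β₁ * A) * α := by
    intro x; ring
  rw [hre] at hD
  simp only [hre]
  set P := β₁ * A with hPdef
  have hP0 : 0 < P := by
    rw [hP]
    apply div_pos _ hba
    have : 0 < β₁ * k₁ - b - α := by linarith
    positivity
  have hP1 : P ≤ 1 := by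
    rw [hP, div_le_one hba]
    nlinarith
  have hb1 : b < 1 := by linarith
  set D := (b - P) ^ 2 - 4 * P * α with hDdef
  have hsq : Real.sqrt D ^ 2 = D := Real.sq_sqrt hD
  have hsnn : 0 ≤ Real.sqrt D := Real.sqrt_nonneg D
  have hlt1 : Real.sqrt D < b + P := by
    rw [show b + P = Real.sqrt ((b + P) ^ 2) from
      (Real.sqrt_sq (by positivity)).symm]
    apply Real.sqrt_lt_sqrt hD
    nlinarith
  have hlt2 : Real.sqrt D < 4 - b - P := by
    rw [show 4 - b - P = Real.sqrt ((4 - b - P) ^ 2) from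
      (Real.sqrt_sq (by nlinarith)).symm]
    apply Real.sqrt_lt_sqrt hD
    nlinarith
  rintro μ (rfl | rfl)
  · refine ⟨by linear_combination (1 / 4) * hsq, by linarith, by nlinarith⟩
  · refine ⟨by linear_combination (1 / 4) * hsq, by nlinarith, by linarith⟩
end

section
/- Suppose b > 0, α > 0, β₁k₁ > b + α, α + b ≤ 1, and β₁k₁ − b − α ≤ 1. Set A = b(β₁k₁−b−α)/(β₁(b+α)), and suppose (b−β₁A)² − 4β₁Aα < 0. Then the two complex roots μ = 1 − (b+β₁A)/2 ± (i/2)·√(4β₁Aα − (b−β₁A)²) of the quadratic μ² − (2−b−β₁A)μ + β₁Aα + (1−b)(1−β₁A) = 0 satisfy |μ|² = 1 − β₁A(1−α) − b(1−β₁A) < 1. -/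
/-! The two numbers are complex conjugates `x ± iy`, so each is a root of `μ² - 2xμ + (x² + y²)`,
the quadratic in the statement, and its squared modulus is the constant term
`β₁A α + (1 - b)(1 - β₁A)`. This is `< 1` because `0 < β₁A < 1`: positivity of `β₁A` comes from
the negative discriminant, and `β₁A = b(β₁k₁ - b - α)/(b + α) ≤ b/(b + α) < 1`. -/

namespace Complex

theorem sq_sub_two_mul_re_mul_add_normSq (z : ℂ) : z ^ 2 - 2 * z.re * z + normSq z = 0 := by
  have hsum : z + (starRingEnd ℂ) z = 2 * z.re := by rw [add_conj]; push_cast; ring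
  linear_combination z * hsum - mul_conj z

theorem re_eq_and_normSq_eq_of_mem_pair {x d : ℝ} (hd : 0 ≤ d) {z : ℂ}
    (hz : z ∈ ({(x : ℂ) + I / 2 * √d, (x : ℂ) - I / 2 * √d} : Set ℂ)) :
    z.re = x ∧ normSq z = x ^ 2 + d / 4 := by
  have hsq : √d ^ 2 = d := Real.sq_sqrt hd
  rcases hz with rfl | rfl <;>
  · refine ⟨by simp, ?_⟩
    simp only [normSq_apply, add_re, sub_re, add_im, sub_im, mul_re, mul_im, ofReal_re, ofReal_im,
      div_ofNat_re, div_ofNat_im, I_re, I_im]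
    linear_combination hsq / 4

end Complex

theorem mul_div_add_lt_one {b α c : ℝ} (hb : 0 < b) (hα : 0 < α) (hc : c ≤ 1) :
    b * c / (b + α) < 1 := by
  rw [div_lt_one (by linarith)]
  nlinarith

theorem complex_roots_in_unit_disc_general (b α β₁ k₁ A : ℝ)
    (hb : 0 < b) (hα : 0 < α)
    (h1 : α + b ≤ 1) (h2 : β₁ * k₁ - b - α ≤ 1)
    (hA : A = b * (β₁ * k₁ - b - α) / (β₁ * (b + α)))
    (hD : (b - β₁ * A) ^ 2 - 4 * β₁ * A * α < 0) :
    ∀ μ ∈ ({(1 : ℂ) - (b + β₁ * A) / 2 +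
              Complex.I / 2 * Real.sqrt (4 * β₁ * A * α - (b - β₁ * A) ^ 2),
            (1 : ℂ) - (b + β₁ * A) / 2 -
              Complex.I / 2 * Real.sqrt (4 * β₁ * A * α - (b - β₁ * A) ^ 2)} :
            Set ℂ),
      μ ^ 2 - (2 - b - β₁ * A) * μ + β₁ * A * α + (1 - b) * (1 - β₁ * A) = 0 ∧
      (‖μ‖) ^ 2 = 1 - β₁ * A * (1 - α) - b * (1 - β₁ * A) ∧
      (‖μ‖) ^ 2 < 1 := by
  have hB_pos : 0 < β₁ * A := by nlinarith [sq_nonneg (b - β₁ * A)]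
  have hB_lt_one : β₁ * A < 1 := by
    have hβ₁ : β₁ ≠ 0 := left_ne_zero_of_mul hB_pos.ne'
    rw [hA, mul_div_assoc', mul_div_mul_left _ _ hβ₁]
    exact mul_div_add_lt_one hb hα h2
  intro μ hμ
  obtain ⟨hre, hnormSq⟩ := Complex.re_eq_and_normSq_eq_of_mem_pair
    (x := 1 - (b + β₁ * A) / 2) (d := 4 * β₁ * A * α - (b - β₁ * A) ^ 2) (by linarith)
    (by push_cast; exact hμ)
  have hnorm : ‖μ‖ ^ 2 = 1 - β₁ * A * (1 - α) - b * (1 - β₁ * A) := by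
    rw [Complex.sq_norm, hnormSq]; ring
  refine ⟨?_, hnorm, ?_⟩
  · have hreC : (μ.re : ℂ) = 1 - (b + β₁ * A) / 2 := by rw [hre]; push_cast; ring
    have hnormC : (Complex.normSq μ : ℂ) = β₁ * A * α + (1 - b) * (1 - β₁ * A) := by
      rw [hnormSq]; push_cast; ring
    linear_combination Complex.sq_sub_two_mul_re_mul_add_normSq μ + 2 * μ * hreC - hnormC
  · rw [hnorm]
    nlinarith [mul_pos hB_pos (by linarith : (0 : ℝ) < 1 - α),
      mul_pos hb (by linarith : (0 : ℝ) < 1 - β₁ * A)]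

theorem complex_roots_in_unit_disc (b α β₁ k₁ A : ℝ)
    (hb : 0 < b) (hα : 0 < α)
    (hgt : β₁ * k₁ > b + α) (h1 : α + b ≤ 1) (h2 : β₁ * k₁ - b - α ≤ 1)
    (hA : A = b * (β₁ * k₁ - b - α) / (β₁ * (b + α)))
    (hD : (b - β₁ * A) ^ 2 - 4 * β₁ * A * α < 0) :
    ∀ μ ∈ ({(1 : ℂ) - (b + β₁ * A) / 2 +
              Complex.I / 2 * Real.sqrt (4 * β₁ * A * α - (b - β₁ * A) ^ 2),
            (1 : ℂ) - (b + β₁ * A) / 2 -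
              Complex.I / 2 * Real.sqrt (4 * β₁ * A * α - (b - β₁ * A) ^ 2)} :
            Set ℂ),
      μ ^ 2 - (2 - b - β₁ * A) * μ + β₁ * A * α + (1 - b) * (1 - β₁ * A) = 0 ∧
      (‖μ‖) ^ 2 = 1 - β₁ * A * (1 - α) - b * (1 - β₁ * A) ∧
      (‖μ‖) ^ 2 < 1 :=
  complex_roots_in_unit_disc_general b α β₁ k₁ A hb hα h1 h2 hA hD
end

section
/- Suppose k₂ = 0 and 0 < b ≤ 1, with α, β₁, β₂, k₁ ≥ 0. Then for every initial point λ⁰ = (x⁰, u⁰, y⁰, v⁰) ∈ S³ with u⁰ = 0, the sequence of iterates Vⁿ(λ⁰) converges to λ₁ = (1,0,0,0) as n → ∞. -/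
/-!
Without infectives of the first kind (`u = 0`) and with `k₂ = 0` the force of infection
`β (k₁ u + k₂ v)` vanishes, so `u` stays zero and `V` acts on `(x, y, v)` as the affine
contraction `x ↦ 1 - (1 - b) (1 - x)`, `y ↦ (1 - b) y`, `v ↦ (1 - b) v`; for `0 < b ≤ 1`
its powers converge to `(1, 0, 0, 0)` at the geometric rate `(1 - b)ⁿ`.
-/

lemma sisiV_of_infected_eq_zero (b α β₁ β₂ k₁ x y v : ℝ) :
    sisiV b α β₁ β₂ k₁ 0 (x, 0, y, v) = (1 - (1 - b) * (1 - x), 0, (1 - b) * y, (1 - b) * v) := by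
  simp only [sisiV, Prod.mk.injEq]
  exact ⟨by ring, by ring, by ring, by ring⟩

lemma sisiV_iterate_of_infected_eq_zero (b α β₁ β₂ k₁ x y v : ℝ) (n : ℕ) :
    (sisiV b α β₁ β₂ k₁ 0)^[n] (x, 0, y, v) =
      (1 - (1 - b) ^ n * (1 - x), 0, (1 - b) ^ n * y, (1 - b) ^ n * v) := by
  induction n with
  | zero => simp
  | succ n ih =>
    rw [Function.iterate_succ_apply', ih, sisiV_of_infected_eq_zero]
    simp only [Prod.mk.injEq]
    exact ⟨by ring, trivial, by ring, by ring⟩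

theorem converges_to_lam1_of_u_zero_general (b α β₁ β₂ k₁ k₂ : ℝ)
    (hk₂ : k₂ = 0) (hb : 0 < b) (hb1 : b ≤ 1) :
    ∀ lam0 ∈ simplexS3, lam0.2.1 = 0 →
      Filter.Tendsto (fun n => (sisiV b α β₁ β₂ k₁ k₂)^[n] lam0)
        Filter.atTop (nhds (((1 : ℝ), (0 : ℝ), (0 : ℝ), (0 : ℝ)))) := by
  rintro ⟨x, u, y, v⟩ - (hu : u = 0)
  subst hu hk₂
  have hpow : Filter.Tendsto (fun n : ℕ => (1 - b) ^ n) Filter.atTop (nhds 0) :=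
    tendsto_pow_atTop_nhds_zero_of_lt_one (by linarith) (by linarith)
  let orbit : ℝ → ℝ × ℝ × ℝ × ℝ := fun t => (1 - t * (1 - x), 0, t * y, t * v)
  have horbit : Continuous orbit := by fun_prop
  have hlim := (horbit.tendsto 0).comp hpow
  simp only [orbit, Function.comp_def, zero_mul, sub_zero] at hlim
  simpa only [sisiV_iterate_of_infected_eq_zero] using hlim

theorem converges_to_lam1_of_u_zero (b α β₁ β₂ k₁ k₂ : ℝ)
    (hk₂ : k₂ = 0) (hb : 0 < b) (hb1 : b ≤ 1)
    (hα : 0 ≤ α) (hβ₁ : 0 ≤ β₁) (hβ₂ : 0 ≤ β₂) (hk₁ : 0 ≤ k₁) :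
    ∀ lam0 ∈ simplexS3, lam0.2.1 = 0 →
      Filter.Tendsto (fun n => (sisiV b α β₁ β₂ k₁ k₂)^[n] lam0)
        Filter.atTop (nhds (((1 : ℝ), (0 : ℝ), (0 : ℝ), (0 : ℝ)))) :=
  converges_to_lam1_of_u_zero_general b α β₁ β₂ k₁ k₂ hk₂ hb hb1
end

section
/- Suppose k₂ = 0, b > 0, β₁k₁ ≤ b + α, and the nonnegative parameters b, α, β₁, β₂, k₁, k₂ satisfy conditions (C). Then for every initial point λ⁰ ∈ S³, the sequence of iterates Vⁿ(λ⁰) converges to λ₁ = (1,0,0,0) as n → ∞. -/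
/-!
With `k₂ = 0` the infected share `u` evolves by
`u' = (1 - b - α + β₁k₁x) u ≤ (1 - c - β₁k₁u) u` with `c = b + α - β₁k₁ ≥ 0`, so `u` decreases
to a fixed point of this logistic bound, which must be `0` because `c + β₁k₁ = b + α > 0`.
The two second-stage compartments evolve exactly linearly in total,
`(y + v)' = (1 - b)(y + v) + αu`, a contraction driven by a null sequence, so `y + v → 0`
as well, and `x = 1 - u - (y + v) → 1` on the invariant simplex.
-/

open Filter Topology

lemma tendsto_zero_of_le_mul_add {a e : ℕ → ℝ} {r : ℝ} (hr0 : 0 ≤ r) (hr1 : r < 1)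
    (ha : ∀ n, 0 ≤ a n) (hrec : ∀ n, a (n + 1) ≤ r * a n + e n)
    (he : Tendsto e atTop (𝓝 0)) :
    Tendsto a atTop (𝓝 0) := by
  have h1r : 0 < 1 - r := by linarith
  rw [Metric.tendsto_atTop]
  intro ε hε
  have hδ : 0 < (1 - r) * ε / 2 := by positivity
  obtain ⟨M, hM⟩ := eventually_atTop.1 (he.eventually (gt_mem_nhds hδ))
  have hbound : ∀ k, a (M + k) ≤ r ^ k * a M + ε / 2 := by
    intro k
    induction k with
    | zero => simp only [pow_zero, one_mul, add_zero]; linarith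
    | succ k ih =>
      calc a (M + (k + 1)) ≤ r * a (M + k) + e (M + k) := hrec (M + k)
        _ ≤ r * (r ^ k * a M + ε / 2) + (1 - r) * ε / 2 := by
          gcongr
          exact (hM (M + k) (Nat.le_add_right M k)).le
        _ = r ^ (k + 1) * a M + ε / 2 := by ring
  have hgeom : Tendsto (fun k => r ^ k * a M) atTop (𝓝 0) := by
    simpa using (tendsto_pow_atTop_nhds_zero_of_lt_one hr0 hr1).mul_const (a M)
  obtain ⟨K, hK⟩ := eventually_atTop.1 (hgeom.eventually (gt_mem_nhds (half_pos hε)))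
  refine ⟨M + K, fun n hn => ?_⟩
  obtain ⟨k, rfl⟩ := Nat.exists_eq_add_of_le (le_of_add_le_left hn)
  rw [Real.dist_eq, sub_zero, abs_of_nonneg (ha _)]
  linarith [hbound k, hK k (by omega)]

lemma tendsto_zero_of_le_logistic {u : ℕ → ℝ} {c K : ℝ} (hc : 0 ≤ c) (hK : 0 ≤ K)
    (hcK : 0 < c + K) (hu : ∀ n, 0 ≤ u n)
    (hrec : ∀ n, u (n + 1) ≤ (1 - c - K * u n) * u n) :
    Tendsto u atTop (𝓝 0) := by
  have hanti : Antitone u := antitone_nat_of_succ_le fun n => by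
    nlinarith [hrec n, hu n, mul_nonneg hK (sq_nonneg (u n))]
  have hlim := tendsto_atTop_ciInf hanti ⟨0, by rintro _ ⟨n, rfl⟩; exact hu n⟩
  set L := ⨅ n, u n
  have hL0 : 0 ≤ L := le_ciInf hu
  have hfix : L ≤ (1 - c - K * L) * L :=
    le_of_tendsto_of_tendsto' (hlim.comp (tendsto_add_atTop_nat 1))
      ((tendsto_const_nhds.sub (hlim.const_mul K)).mul hlim) hrec
  have hL : L = 0 := by
    by_contra hne
    have hpos : 0 < L := lt_of_le_of_ne hL0 (Ne.symm hne)
    nlinarith [mul_nonneg hc hL0, mul_nonneg hK (sq_nonneg L), mul_pos hcK hpos]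
  exact hL ▸ hlim

section SISI

variable {b α β₁ β₂ k₁ : ℝ}

lemma mapsTo_sisiV_simplexS3 (hb : 0 ≤ b) (hα : 0 ≤ α) (hαb : α + b ≤ 1)
    (hβ₁k₁ : 0 ≤ β₁ * k₁) (hβ₁k₁_le : β₁ * k₁ ≤ 1)
    (hβ₂k₁ : 0 ≤ β₂ * k₁) (hβ₂k₁_le : β₂ * k₁ ≤ 1 + α - b) :
    Set.MapsTo (sisiV b α β₁ β₂ k₁ 0) simplexS3 simplexS3 := by
  rintro ⟨x, u, y, v⟩ ⟨hx, hu, hy, hv, hsum⟩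
  simp only [simplexS3, Set.mem_ofPred_eq, sisiV, zero_mul, add_zero]
  refine ⟨?_, ?_, ?_, ?_, by linear_combination (1 - b) * hsum⟩
  · nlinarith [mul_nonneg (sub_nonneg.2 hβ₁k₁_le) (mul_nonneg hu hx),
      mul_nonneg (by linarith : (0 : ℝ) ≤ 1 - x - u) hx, mul_nonneg hb (by linarith : 0 ≤ 1 - x)]
  · nlinarith [mul_nonneg hu (by linarith : (0 : ℝ) ≤ 1 - b - α),
      mul_nonneg hβ₁k₁ (mul_nonneg hu hx)]
  · nlinarith [mul_nonneg (sub_nonneg.2 hβ₂k₁_le) (mul_nonneg hu hy),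
      mul_nonneg (mul_nonneg hα hu) (by linarith : (0 : ℝ) ≤ 1 - u - y),
      mul_nonneg (mul_nonneg (by linarith : (0 : ℝ) ≤ 1 - b) hy) (by linarith : (0 : ℝ) ≤ 1 - u),
      mul_nonneg hα (sq_nonneg u)]
  · nlinarith [mul_nonneg hv (by linarith : (0 : ℝ) ≤ 1 - b), mul_nonneg hβ₂k₁ (mul_nonneg hu hy)]

lemma sisiV_infected_le {p : ℝ × ℝ × ℝ × ℝ} (hp : p ∈ simplexS3) (hβ₁k₁ : 0 ≤ β₁ * k₁) :
    (sisiV b α β₁ β₂ k₁ 0 p).2.1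
      ≤ (1 - (b + α - β₁ * k₁) - β₁ * k₁ * p.2.1) * p.2.1 := by
  obtain ⟨hx, hu, hy, hv, hsum⟩ := hp
  simp only [sisiV, zero_mul, add_zero]
  nlinarith [mul_nonneg hβ₁k₁ (mul_nonneg hu (by linarith : 0 ≤ 1 - p.2.1 - p.1))]

lemma sisiV_secondStage_eq (k₂ : ℝ) (p : ℝ × ℝ × ℝ × ℝ) :
    (sisiV b α β₁ β₂ k₁ k₂ p).2.2.1 + (sisiV b α β₁ β₂ k₁ k₂ p).2.2.2
      = (1 - b) * (p.2.2.1 + p.2.2.2) + α * p.2.1 := by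
  simp only [sisiV]
  ring

end SISI

lemma tendsto_lam1_of_mem_simplexS3 {p : ℕ → ℝ × ℝ × ℝ × ℝ} (hp : ∀ n, p n ∈ simplexS3)
    (hu : Tendsto (fun n => (p n).2.1) atTop (𝓝 0))
    (hw : Tendsto (fun n => (p n).2.2.1 + (p n).2.2.2) atTop (𝓝 0)) :
    Tendsto p atTop (𝓝 ((1 : ℝ), (0 : ℝ), (0 : ℝ), (0 : ℝ))) := by
  have hy : Tendsto (fun n => (p n).2.2.1) atTop (𝓝 0) :=
    squeeze_zero (fun n => (hp n).2.2.1) (fun n => by linarith [(hp n).2.2.2.1]) hw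
  have hv : Tendsto (fun n => (p n).2.2.2) atTop (𝓝 0) :=
    squeeze_zero (fun n => (hp n).2.2.2.1) (fun n => by linarith [(hp n).2.2.1]) hw
  have hx : Tendsto (fun n => (p n).1) atTop (𝓝 1) := by
    have h := ((tendsto_const_nhds (x := (1 : ℝ))).sub hu).sub hw
    rw [sub_zero, sub_zero] at h
    exact h.congr fun n => by linarith [(hp n).2.2.2.2]
  exact hx.prodMk_nhds (hu.prodMk_nhds (hy.prodMk_nhds hv))

theorem converges_to_lam1 (b α β₁ β₂ k₁ k₂ : ℝ)
    (hk₂ : k₂ = 0) (hb : 0 < b)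
    (hα : 0 ≤ α) (hβ₁ : 0 ≤ β₁) (hβ₂ : 0 ≤ β₂) (hk₁ : 0 ≤ k₁)
    (hle : β₁ * k₁ ≤ b + α) (hC : condC b α β₁ β₂ k₁ k₂) :
    ∀ lam0 ∈ simplexS3,
      Filter.Tendsto (fun n => (sisiV b α β₁ β₂ k₁ k₂)^[n] lam0)
        Filter.atTop (nhds (((1 : ℝ), (0 : ℝ), (0 : ℝ), (0 : ℝ)))) := by
  subst hk₂
  obtain ⟨hαb, -, -, -, -, -, -, -, hC9⟩ := hC
  intro lam0 h0
  set p := fun n => (sisiV b α β₁ β₂ k₁ 0)^[n] lam0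
  have hβ₁k₁ : 0 ≤ β₁ * k₁ := mul_nonneg hβ₁ hk₁
  have hp : ∀ n, p n ∈ simplexS3 := fun n =>
    (mapsTo_sisiV_simplexS3 hb.le hα hαb hβ₁k₁ (by linarith) (mul_nonneg hβ₂ hk₁)
      (by linarith [(abs_le.1 hC9).1])).iterate n h0
  have hstep : ∀ n, p (n + 1) = sisiV b α β₁ β₂ k₁ 0 (p n) := fun n =>
    Function.iterate_succ_apply' _ n lam0
  have hu : Tendsto (fun n => (p n).2.1) atTop (𝓝 0) :=
    tendsto_zero_of_le_logistic (by linarith) hβ₁k₁ (by linarith) (fun n => (hp n).2.1)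
      fun n => hstep n ▸ sisiV_infected_le (hp n) hβ₁k₁
  have hw : Tendsto (fun n => (p n).2.2.1 + (p n).2.2.2) atTop (𝓝 0) :=
    tendsto_zero_of_le_mul_add (by linarith) (by linarith)
      (fun n => add_nonneg (hp n).2.2.1 (hp n).2.2.2.1)
      (fun n => (hstep n ▸ sisiV_secondStage_eq 0 (p n)).le)
      (by simpa using hu.const_mul α)
  exact tendsto_lam1_of_mem_simplexS3 hp hu hw
end

section
/- Suppose β₁k₁ ≤ b + α with b, α, β₁, k₁ ≥ 0 and b + α ≤ 1. Let x, u, z be real numbers with 0 ≤ x ≤ 1, u ≥ 0, z ≥ 0 and bz − αu ≥ 0, and set u' = u − bu − αu + β₁k₁ux and z' = z − bz + αu. Then bz' − αu' ≥ 0. -/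
/-!
One step multiplies the quantity `b z − α u` by `1 − b` and adds the nonnegative term
`α u (b + α − β₁ k₁ x)`, because `β₁ k₁ x ≤ β₁ k₁ ≤ b + α`.
-/

lemma bz_sub_αu_step_eq (b α c x u z : ℝ) :
    b * (z - b * z + α * u) - α * (u - b * u - α * u + c * u * x)
      = (1 - b) * (b * z - α * u) + α * u * (b + α - c * x) := by
  ring

theorem invariant_set_M_general (b α β₁ k₁ x u z : ℝ)
    (hα : 0 ≤ α) (hβ₁ : 0 ≤ β₁) (hk₁ : 0 ≤ k₁)
    (hle : β₁ * k₁ ≤ b + α) (hba : b + α ≤ 1)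
    (hx1 : x ≤ 1) (hu : 0 ≤ u)
    (hM : 0 ≤ b * z - α * u) :
    0 ≤ b * (z - b * z + α * u) - α * (u - b * u - α * u + β₁ * k₁ * u * x) := by
  have hb1 : 0 ≤ 1 - b := by linarith
  have hinc : β₁ * k₁ * x ≤ b + α :=
    (mul_le_of_le_one_right (mul_nonneg hβ₁ hk₁) hx1).trans hle
  rw [bz_sub_αu_step_eq]
  exact add_nonneg (mul_nonneg hb1 hM) (mul_nonneg (mul_nonneg hα hu) (sub_nonneg.2 hinc))

theorem invariant_set_M (b α β₁ k₁ x u z : ℝ)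
    (hb : 0 ≤ b) (hα : 0 ≤ α) (hβ₁ : 0 ≤ β₁) (hk₁ : 0 ≤ k₁)
    (hle : β₁ * k₁ ≤ b + α) (hba : b + α ≤ 1)
    (hx0 : 0 ≤ x) (hx1 : x ≤ 1) (hu : 0 ≤ u) (hz : 0 ≤ z)
    (hM : 0 ≤ b * z - α * u) :
    0 ≤ b * (z - b * z + α * u) - α * (u - b * u - α * u + β₁ * k₁ * u * x) :=
  invariant_set_M_general b α β₁ k₁ x u z hα hβ₁ hk₁ hle hba hx1 hu hM
end

section
/- Suppose k₂ = 0, b > 0, β₁k₁ ≤ b + α, and the nonnegative parameters b, α, β₁, β₂, k₁, k₂ satisfy conditions (C). Then for every initial point λ⁰ ∈ S³, the sequence u⁽ⁿ⁾ of second coordinates of the iterates Vⁿ(λ⁰) is non-increasing and converges to 0 as n → ∞. -/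
open Filter Topology Set

theorem tendsto_zero_of_antitone_of_le_sub {u : ℕ → ℝ} {φ : ℝ → ℝ} (hu : Antitone u)
    (hu₀ : ∀ n, 0 ≤ u n) (hφ : Continuous φ) (hφpos : ∀ t, 0 < t → 0 < φ t)
    (hstep : ∀ n, u (n + 1) ≤ u n - φ (u n)) : Tendsto u atTop (𝓝 0) := by
  obtain ⟨L, hL⟩ : ∃ L, Tendsto u atTop (𝓝 L) :=
    ⟨_, tendsto_atTop_ciInf hu ⟨0, by rintro _ ⟨n, rfl⟩; exact hu₀ n⟩⟩
  have hL_le : L ≤ L - φ L :=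
    le_of_tendsto_of_tendsto' (hL.comp (tendsto_add_atTop_nat 1))
      (hL.sub ((hφ.tendsto L).comp hL)) hstep
  rcases (ge_of_tendsto' hL hu₀).eq_or_lt with hL₀ | hL₀
  · rwa [hL₀]
  · linarith [hφpos L hL₀]

section SISI

variable {b α β₁ β₂ k₁ k₂ : ℝ}

theorem sisiV_mapsTo_simplexS3 (hb : 0 ≤ b) (hα : 0 ≤ α) (hβ₁ : 0 ≤ β₁) (hβ₂ : 0 ≤ β₂)
    (hk₁ : 0 ≤ k₁) (hk₂ : 0 ≤ k₂) (hC : condC b α β₁ β₂ k₁ k₂) :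
    MapsTo (sisiV b α β₁ β₂ k₁ k₂) simplexS3 simplexS3 := by
  obtain ⟨hαb, -, -, hβ₂k₂, hβ₁k₁, -, hβ₁k₂, -, hβ₂k₁⟩ := hC
  have hβ₁k₁ : β₁ * k₁ ≤ 1 + b := by linarith [(abs_le.mp hβ₁k₁).1]
  have hβ₁k₂ : β₁ * k₂ ≤ 1 + b := by linarith [(abs_le.mp hβ₁k₂).1]
  have hβ₂k₁ : β₂ * k₁ ≤ 1 - b + α := by linarith [(abs_le.mp hβ₂k₁).1]
  rintro ⟨x, u, y, v⟩ ⟨hx, hu, hy, hv, hsum⟩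
  simp only [sisiV, simplexS3, mem_ofPred_eq]
  have hforce : 0 ≤ k₁ * u + k₂ * v := by positivity
  refine ⟨?_, ?_, ?_, ?_, by linear_combination (1 - b) * hsum⟩
  · -- `x' ≥ b (1 - x)² + x²`
    have h : β₁ * (k₁ * u + k₂ * v) ≤ (1 + b) * (1 - x) := by nlinarith
    nlinarith [mul_le_mul_of_nonneg_left h hx, mul_nonneg hb (sq_nonneg (1 - x))]
  · nlinarith [mul_nonneg (mul_nonneg hβ₁ hforce) hx]
  · -- `1 - b - β₂ k₂ v ≥ (1 - b)(y + u)` and `1 - b - β₂ k₁ ≥ -α` give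
    -- `y' ≥ (1 - b) y² + α u (1 - y)`
    have h₂ : (1 - b) * (y + u) ≤ 1 - b - β₂ * k₂ * v := by nlinarith
    have h₁ : -α * u * y ≤ (1 - b - β₂ * k₁) * u * y := by
      nlinarith [mul_nonneg hu hy]
    nlinarith [mul_le_mul_of_nonneg_left h₂ hy,
      mul_nonneg hα (mul_nonneg hu (by linarith : 0 ≤ 1 - y)), mul_nonneg (by linarith : 0 ≤ 1 - b) (sq_nonneg y)]
  · nlinarith [mul_nonneg (mul_nonneg hβ₂ hforce) hy]

theorem sisiV_snd_fst_le_sub_sq (hbα : 0 ≤ b + α) (hle : β₁ * k₁ ≤ b + α)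
    {p : ℝ × ℝ × ℝ × ℝ} (hp : p ∈ simplexS3) :
    (sisiV b α β₁ β₂ k₁ 0 p).2.1 ≤ p.2.1 - (b + α) * p.2.1 ^ 2 := by
  obtain ⟨hx, hu, hy, hv, hsum⟩ := hp
  have h : (b + α) * p.2.1 ≤ b + α - β₁ * k₁ * p.1 := by nlinarith
  simp only [sisiV]
  nlinarith [mul_le_mul_of_nonneg_left h hu]

end SISI

theorem u_antitone_tendsto_zero (b α β₁ β₂ k₁ k₂ : ℝ)
    (hk₂ : k₂ = 0) (hb : 0 < b)
    (hα : 0 ≤ α) (hβ₁ : 0 ≤ β₁) (hβ₂ : 0 ≤ β₂) (hk₁ : 0 ≤ k₁)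
    (hle : β₁ * k₁ ≤ b + α) (hC : condC b α β₁ β₂ k₁ k₂) :
    ∀ lam0 ∈ simplexS3,
      Antitone (fun n => ((sisiV b α β₁ β₂ k₁ k₂)^[n] lam0).2.1) ∧
      Filter.Tendsto (fun n => ((sisiV b α β₁ β₂ k₁ k₂)^[n] lam0).2.1)
        Filter.atTop (nhds 0) := by
  subst hk₂
  intro lam0 hlam0
  have hmem (n : ℕ) : (sisiV b α β₁ β₂ k₁ 0)^[n] lam0 ∈ simplexS3 :=
    (sisiV_mapsTo_simplexS3 hb.le hα hβ₁ hβ₂ hk₁ le_rfl hC).iterate n hlam0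
  set u : ℕ → ℝ := fun n => ((sisiV b α β₁ β₂ k₁ 0)^[n] lam0).2.1
  have hstep (n : ℕ) : u (n + 1) ≤ u n - (b + α) * u n ^ 2 := by
    simp only [u, Function.iterate_succ_apply']
    exact sisiV_snd_fst_le_sub_sq (by positivity) hle (hmem n)
  have hanti : Antitone u :=
    antitone_nat_of_succ_le fun n => by nlinarith [hstep n, sq_nonneg (u n)]
  exact ⟨hanti, tendsto_zero_of_antitone_of_le_sub (φ := fun t => (b + α) * t ^ 2) hanti
    (fun n => (hmem n).2.1) (by fun_prop) (fun t ht => by positivity) hstep⟩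
end

section
/- Suppose b = 0 and α, β₁, β₂, k₁, k₂ are all strictly positive. Then the set of fixed points of V in S³ is exactly {λ₄} ∪ Λ₉, where λ₄ = (0,0,0,1) and Λ₉ = {(x,u,y,v) ∈ S³ : u = 0 and v = 0}. -/
theorem sisiV_zero_eq_self_iff (α β₁ β₂ k₁ k₂ x u y v : ℝ) :
    sisiV 0 α β₁ β₂ k₁ k₂ (x, u, y, v) = (x, u, y, v) ↔
      β₁ * (k₁ * u + k₂ * v) * x = 0 ∧ α * u = 0 ∧ β₂ * (k₁ * u + k₂ * v) * y = 0 := by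
  simp only [sisiV, Prod.mk.injEq]
  constructor
  · rintro ⟨h₁, h₂, h₃, -⟩
    exact ⟨by linarith, by linarith, by linarith⟩
  · rintro ⟨h₁, h₂, h₃⟩
    exact ⟨by linarith, by linarith, by linarith, by linarith⟩

theorem sisiV_zero_eq_self_iff_of_ne_zero {α β₁ β₂ k₂ : ℝ} (hα : α ≠ 0) (hβ₁ : β₁ ≠ 0)
    (hβ₂ : β₂ ≠ 0) (hk₂ : k₂ ≠ 0) (k₁ x u y v : ℝ) :
    sisiV 0 α β₁ β₂ k₁ k₂ (x, u, y, v) = (x, u, y, v) ↔ u = 0 ∧ v * x = 0 ∧ v * y = 0 := by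
  rw [sisiV_zero_eq_self_iff]
  constructor
  · rintro ⟨hx, hu, hy⟩
    obtain rfl : u = 0 := (mul_eq_zero.1 hu).resolve_left hα
    simp_all
  · rintro ⟨rfl, hx, hy⟩
    simp [mul_assoc, hx, hy]

theorem eq_vertex_or_eq_zero_of_mem_simplexS3 {x y v : ℝ}
    (hp : (x, (0 : ℝ), y, v) ∈ simplexS3) (hx : v * x = 0) (hy : v * y = 0) :
    (x, (0 : ℝ), y, v) = (0, 0, 0, 1) ∨ v = 0 := by
  obtain ⟨-, -, -, -, hsum⟩ := hp
  by_cases hv : v = 0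
  · exact Or.inr hv
  · obtain rfl : x = 0 := (mul_eq_zero.1 hx).resolve_left hv
    obtain rfl : y = 0 := (mul_eq_zero.1 hy).resolve_left hv
    norm_num at hsum
    simp [hsum]

theorem fixedPoints_b_zero_general (b α β₁ β₂ k₁ k₂ : ℝ)
    (hb : b = 0) (hα : 0 < α) (hβ₁ : 0 < β₁) (hβ₂ : 0 < β₂)
    (hk₂ : 0 < k₂) :
    {p : ℝ × ℝ × ℝ × ℝ | p ∈ simplexS3 ∧ sisiV b α β₁ β₂ k₁ k₂ p = p} =
      {((0 : ℝ), (0 : ℝ), (0 : ℝ), (1 : ℝ))} ∪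
      {p : ℝ × ℝ × ℝ × ℝ | p ∈ simplexS3 ∧ p.2.1 = 0 ∧ p.2.2.2 = 0} := by
  subst hb
  ext ⟨x, u, y, v⟩
  simp only [Set.mem_union, Set.mem_singleton_iff, Set.mem_ofPred_eq,
    sisiV_zero_eq_self_iff_of_ne_zero hα.ne' hβ₁.ne' hβ₂.ne' hk₂.ne']
  constructor
  · rintro ⟨hp, rfl, hx, hy⟩
    exact (eq_vertex_or_eq_zero_of_mem_simplexS3 hp hx hy).imp id fun hv ↦ ⟨hp, rfl, hv⟩
  · rintro (hp | ⟨hp, rfl, rfl⟩)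
    · simp only [Prod.mk.injEq] at hp
      obtain ⟨rfl, rfl, rfl, rfl⟩ := hp
      exact ⟨by norm_num [simplexS3], rfl, mul_zero 1, mul_zero 1⟩
    · exact ⟨hp, rfl, zero_mul x, zero_mul y⟩

theorem fixedPoints_b_zero (b α β₁ β₂ k₁ k₂ : ℝ)
    (hb : b = 0) (hα : 0 < α) (hβ₁ : 0 < β₁) (hβ₂ : 0 < β₂)
    (hk₁ : 0 < k₁) (hk₂ : 0 < k₂) :
    {p : ℝ × ℝ × ℝ × ℝ | p ∈ simplexS3 ∧ sisiV b α β₁ β₂ k₁ k₂ p = p} =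
      {((0 : ℝ), (0 : ℝ), (0 : ℝ), (1 : ℝ))} ∪
      {p : ℝ × ℝ × ℝ × ℝ | p ∈ simplexS3 ∧ p.2.1 = 0 ∧ p.2.2.2 = 0} :=
  fixedPoints_b_zero_general b α β₁ β₂ k₁ k₂ hb hα hβ₁ hβ₂ hk₂
end

section
/- Suppose b = 0 and k₂ = 0, and α, β₁, β₂, k₁ are all strictly positive. Then the set of fixed points of V in S³ is exactly Λ₁₂ = {(x,u,y,v) ∈ S³ : u = 0}. -/
/-- Adding the first two coordinates of `V p = p` cancels the infection term, leaving `α u = 0`. -/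
theorem sisiV_snd_eq_zero_of_eq_self {α β₁ β₂ k₁ k₂ : ℝ} (hα : 0 < α) {p : ℝ × ℝ × ℝ × ℝ}
    (h : sisiV 0 α β₁ β₂ k₁ k₂ p = p) : p.2.1 = 0 := by
  have hx := congrArg Prod.fst h
  have hu := congrArg (fun q => q.2.1) h
  simp only [sisiV] at hx hu
  have hαu : α * p.2.1 = 0 := by linarith
  exact (mul_eq_zero.1 hαu).resolve_left hα.ne'

theorem sisiV_eq_self_of_snd_eq_zero (α β₁ β₂ k₁ : ℝ) {p : ℝ × ℝ × ℝ × ℝ} (hu : p.2.1 = 0) :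
    sisiV 0 α β₁ β₂ k₁ 0 p = p := by
  obtain ⟨x, u, y, v⟩ := p
  simp only at hu
  subst hu
  simp only [sisiV]
  ext <;> ring

theorem fixedPoints_b_k2_zero_general (b α β₁ β₂ k₁ k₂ : ℝ)
    (hb : b = 0) (hk₂ : k₂ = 0) (hα : 0 < α) :
    {p : ℝ × ℝ × ℝ × ℝ | p ∈ simplexS3 ∧ sisiV b α β₁ β₂ k₁ k₂ p = p} =
      {p : ℝ × ℝ × ℝ × ℝ | p ∈ simplexS3 ∧ p.2.1 = 0} := by
  subst hb hk₂
  ext p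
  exact and_congr_right fun _ =>
    ⟨sisiV_snd_eq_zero_of_eq_self hα, sisiV_eq_self_of_snd_eq_zero α β₁ β₂ k₁⟩

theorem fixedPoints_b_k2_zero (b α β₁ β₂ k₁ k₂ : ℝ)
    (hb : b = 0) (hk₂ : k₂ = 0) (hα : 0 < α) (hβ₁ : 0 < β₁)
    (hβ₂ : 0 < β₂) (hk₁ : 0 < k₁) :
    {p : ℝ × ℝ × ℝ × ℝ | p ∈ simplexS3 ∧ sisiV b α β₁ β₂ k₁ k₂ p = p} =
      {p : ℝ × ℝ × ℝ × ℝ | p ∈ simplexS3 ∧ p.2.1 = 0} :=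
  fixedPoints_b_k2_zero_general b α β₁ β₂ k₁ k₂ hb hk₂ hα
end
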